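/- arXiv:1705.07022 — 6 statements merged into one kernel-verified Lean document; each statement's English description precedes it below -/
import Mathlib

section
/- Let (Ω, μ) be a finite measure space, let ρ̄ > 0, β ∈ (1, ∞), and let p : [0, ρ̄) → ℝ be continuous, nondecreasing, and satisfy p(ζ) → +∞ as ζ → ρ̄⁻. Let (ρ_n) be a sequence of measurable functions on Ω with 0 ≤ ρ_n(x) < ρ̄ for μ-a.e. x, such that sup_n ∫_Ω |p(ρ_n)|^β dμ ≤ C for some constant C, and such that ρ_n converges to a measurable function ρ weak-* in L^∞(Ω), i.e. ∫_Ω ρ_n g dμ → ∫_Ω ρ g dμ for every g ∈ L¹(Ω, μ). Then 0 ≤ ρ(x) < ρ̄ for μ-a.e. x ∈ Ω. -/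
open MeasureTheory Filter

/-- Lemma 2.4 (first assertion): strict upper bound on the weak-* limit density
for a hard-sphere pressure law. -/
theorem stmt0
    {Ω : Type*} [MeasurableSpace Ω] (μ : Measure Ω) [IsFiniteMeasure μ]
    (rbar : ℝ) (hrbar : 0 < rbar) (β : ℝ) (hβ : 1 < β)
    (p : ℝ → ℝ)
    (hp_cont : ContinuousOn p (Set.Ico 0 rbar))
    (hp_mono : MonotoneOn p (Set.Ico 0 rbar))
    (hp_tend : Tendsto p (nhdsWithin rbar (Set.Ico 0 rbar)) atTop)
    (ρn : ℕ → Ω → ℝ) (hρn_meas : ∀ n, Measurable (ρn n))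
    (hρn_bdd : ∀ n, ∀ᵐ x ∂μ, 0 ≤ ρn n x ∧ ρn n x < rbar)
    (C : ℝ)
    (hbound : ∀ n, ∫⁻ x, ENNReal.ofReal (|p (ρn n x)| ^ β) ∂μ ≤ ENNReal.ofReal C)
    (ρ : Ω → ℝ) (hρ_meas : Measurable ρ)
    (hweak : ∀ g : Ω → ℝ, Integrable g μ →
      Tendsto (fun n => ∫ x, ρn n x * g x ∂μ) atTop (nhds (∫ x, ρ x * g x ∂μ))) :
    ∀ᵐ x ∂μ, 0 ≤ ρ x ∧ ρ x < rbar := by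
  have hρn_int : ∀ n, Integrable (ρn n) μ := by
    intro n
    refine Integrable.mono' (integrable_const rbar) (hρn_meas n).aestronglyMeasurable ?_
    filter_upwards [hρn_bdd n] with x hx
    rw [Real.norm_eq_abs, abs_of_nonneg hx.1]; exact hx.2.le
  -- weak convergence on measurable sets
  have hset : ∀ s : Set Ω, MeasurableSet s →
      Tendsto (fun n => ∫ x in s, ρn n x ∂μ) atTop (nhds (∫ x in s, ρ x ∂μ)) := by
    intro s hs
    have hg : Integrable (s.indicator (fun _ => (1:ℝ))) μ := (integrable_const 1).indicator hs
    have h := hweak _ hg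
    have e1 : ∀ (f : Ω → ℝ), (fun x => f x * s.indicator (fun _ => (1:ℝ)) x) = s.indicator f := by
      intro f; funext x; by_cases hx : x ∈ s <;> simp [Set.indicator_apply, hx]
    have h2 : ∀ (f : Ω → ℝ), ∫ x, f x * s.indicator (fun _ => (1:ℝ)) x ∂μ = ∫ x in s, f x ∂μ := by
      intro f; rw [show (fun x => f x * s.indicator (fun _ => (1:ℝ)) x) = s.indicator f from e1 f,
        integral_indicator hs]
    simp only [h2] at h
    exact h
  -- Part 1 : ρ ≥ 0 a.e.
  have hBk : ∀ k : ℕ, μ {x | ρ x ∈ Set.Icc (-(k+1:ℝ)) (-(1/(k+1)))} = 0 := by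
    intro k
    set B := {x | ρ x ∈ Set.Icc (-(k+1:ℝ)) (-(1/(k+1)))} with hBdef
    have hB : MeasurableSet B := hρ_meas measurableSet_Icc
    have h := hset B hB
    have h1 : ∀ n, 0 ≤ ∫ x in B, ρn n x ∂μ := by
      intro n
      exact integral_nonneg_of_ae (ae_restrict_of_ae ((hρn_bdd n).mono fun x hx => hx.1))
    have h2 : 0 ≤ ∫ x in B, ρ x ∂μ := ge_of_tendsto' h h1
    have hk1 : (0:ℝ) < 1/(k+1) := by positivity
    have hint : IntegrableOn ρ B μ := by
      refine Integrable.mono' (integrable_const ((k:ℝ)+1)) hρ_meas.aestronglyMeasurable.restrict ?_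
      filter_upwards [ae_restrict_mem hB] with x hx
      obtain ⟨hx1, hx2⟩ := hx
      rw [Real.norm_eq_abs, abs_of_nonpos (by linarith)]
      linarith
    have h3 : ∫ x in B, ρ x ∂μ ≤ (-(1/(k+1:ℝ))) * (μ B).toReal := by
      calc ∫ x in B, ρ x ∂μ ≤ ∫ _x in B, (-(1/(k+1:ℝ))) ∂μ :=
            setIntegral_mono_on hint (integrableOn_const (measure_ne_top μ B)) hB
              (fun x hx => hx.2)
        _ = (-(1/(k+1:ℝ))) * (μ B).toReal := by rw [setIntegral_const, smul_eq_mul, mul_comm, measureReal_def]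
    have ht : (μ B).toReal = 0 := by nlinarith [(ENNReal.toReal_nonneg : (0:ℝ) ≤ (μ B).toReal)]
    rcases (ENNReal.toReal_eq_zero_iff _).1 ht with h | h
    · exact h
    · exact absurd h (measure_ne_top μ B)
  have hnull_neg : μ {x | ρ x < 0} = 0 := by
    refine measure_mono_null ?_ (measure_iUnion_null hBk)
    intro x hx
    simp only [Set.mem_setOf_eq] at hx
    obtain ⟨k1, hk1⟩ := exists_nat_ge (-ρ x)
    obtain ⟨k2, hk2⟩ := exists_nat_ge (1/(-ρ x))
    refine Set.mem_iUnion.2 ⟨k1 + k2, ?_, ?_⟩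
    · push_cast; linarith
    · have hpos : (0:ℝ) < -ρ x := by linarith
      have h1 : 1/(-ρ x) ≤ (k1:ℝ) + k2 + 1 := by push_cast at hk2 ⊢; linarith
      have := one_div_le_one_div_of_le (by positivity : (0:ℝ) < 1/(-ρ x)) h1
      rw [one_div_one_div] at this
      push_cast
      linarith
  -- Part 2a : ρ ≤ rbar a.e.
  have hCk : ∀ k : ℕ, μ {x | ρ x ∈ Set.Icc (rbar + 1/(k+1)) (rbar + (k+1:ℝ))} = 0 := by
    intro k
    set Cs := {x | ρ x ∈ Set.Icc (rbar + 1/(k+1)) (rbar + (k+1:ℝ))} with hCdef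
    have hC : MeasurableSet Cs := hρ_meas measurableSet_Icc
    have h := hset Cs hC
    have h1 : ∀ n, ∫ x in Cs, ρn n x ∂μ ≤ rbar * (μ Cs).toReal := by
      intro n
      calc ∫ x in Cs, ρn n x ∂μ ≤ ∫ _x in Cs, rbar ∂μ := by
            refine integral_mono_of_nonneg (ae_restrict_of_ae ((hρn_bdd n).mono fun x hx => hx.1))
              (integrable_const rbar) (ae_restrict_of_ae ((hρn_bdd n).mono fun x hx => hx.2.le))
        _ = rbar * (μ Cs).toReal := by rw [setIntegral_const, smul_eq_mul, mul_comm, measureReal_def]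
    have h2 : ∫ x in Cs, ρ x ∂μ ≤ rbar * (μ Cs).toReal := le_of_tendsto' h h1
    have hk1 : (0:ℝ) < 1/(k+1) := by positivity
    have hint : IntegrableOn ρ Cs μ := by
      refine Integrable.mono' (integrable_const (rbar + ((k:ℝ)+1))) hρ_meas.aestronglyMeasurable.restrict ?_
      filter_upwards [ae_restrict_mem hC] with x hx
      obtain ⟨hx1, hx2⟩ := hx
      rw [Real.norm_eq_abs, abs_of_nonneg (by linarith)]
      linarith
    have h3 : (rbar + 1/(k+1:ℝ)) * (μ Cs).toReal ≤ ∫ x in Cs, ρ x ∂μ := by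
      calc (rbar + 1/(k+1:ℝ)) * (μ Cs).toReal = ∫ _x in Cs, (rbar + 1/(k+1:ℝ)) ∂μ := by
            rw [setIntegral_const, smul_eq_mul, mul_comm, measureReal_def]
        _ ≤ ∫ x in Cs, ρ x ∂μ :=
            setIntegral_mono_on (integrableOn_const (measure_ne_top μ Cs)) hint hC
              (fun x hx => hx.1)
    have ht : (μ Cs).toReal = 0 := by nlinarith [(ENNReal.toReal_nonneg : (0:ℝ) ≤ (μ Cs).toReal)]
    rcases (ENNReal.toReal_eq_zero_iff _).1 ht with h | h
    · exact h
    · exact absurd h (measure_ne_top μ Cs)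
  have hnull_gt : μ {x | rbar < ρ x} = 0 := by
    refine measure_mono_null ?_ (measure_iUnion_null hCk)
    intro x hx
    simp only [Set.mem_setOf_eq] at hx
    obtain ⟨k1, hk1⟩ := exists_nat_ge (ρ x - rbar)
    obtain ⟨k2, hk2⟩ := exists_nat_ge (1/(ρ x - rbar))
    refine Set.mem_iUnion.2 ⟨k1 + k2, ?_, ?_⟩
    · have hpos : (0:ℝ) < ρ x - rbar := by linarith
      have h1 : 1/(ρ x - rbar) ≤ (k1:ℝ) + k2 + 1 := by push_cast at hk2 ⊢; linarith
      have := one_div_le_one_div_of_le (by positivity : (0:ℝ) < 1/(ρ x - rbar)) h1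
      rw [one_div_one_div] at this
      push_cast
      linarith
    · push_cast; linarith
  -- Part 2b : μ {ρ = rbar} = 0
  have hnull_eq : μ {x | ρ x = rbar} = 0 := by
    set A := {x | ρ x = rbar} with hAdef
    have hA : MeasurableSet A := hρ_meas (measurableSet_singleton rbar)
    set t := (μ A).toReal with htdef
    have ht0 : 0 ≤ t := ENNReal.toReal_nonneg
    have htend := hset A hA
    have hlim : ∫ x in A, ρ x ∂μ = rbar * t := by
      rw [setIntegral_congr_fun hA (fun x hx => hx), setIntegral_const, smul_eq_mul, mul_comm, measureReal_def]
    rw [hlim] at htend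
    -- main claim : t ≤ ε for every ε > 0
    have hmain : ∀ ε : ℝ, 0 < ε → t ≤ 2 * ε := by
      intro ε hε
      -- choose M with M ≥ 1 and (|C|+1)/ε ≤ M ^ β
      set M : ℝ := max 1 (((|C|+1)/ε) ^ β⁻¹) with hMdef
      have hM1 : (1:ℝ) ≤ M := le_max_left _ _
      have hβ0 : (0:ℝ) < β := by linarith
      have hq0 : (0:ℝ) ≤ (|C|+1)/ε := by positivity
      have hMβ : (|C|+1)/ε ≤ M ^ β := by
        calc (|C|+1)/ε = (((|C|+1)/ε) ^ β⁻¹) ^ β := (Real.rpow_inv_rpow hq0 (by linarith)).symm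
          _ ≤ M ^ β := Real.rpow_le_rpow (Real.rpow_nonneg hq0 _) (le_max_right _ _) hβ0.le
      have hMβpos : (0:ℝ) < M ^ β := Real.rpow_pos_of_pos (by linarith) β
      have hCε : C / M ^ β ≤ ε := by
        rw [div_le_iff₀ hMβpos]
        have h1 : ε * ((|C|+1)/ε) ≤ ε * M ^ β := by
          apply mul_le_mul_of_nonneg_left hMβ hε.le
        have h2 : ε * ((|C|+1)/ε) = |C| + 1 := by field_simp
        have := le_abs_self C
        linarith
      -- choose δ > 0 such that p ≥ M on (rbar - δ, rbar) ∩ [0, rbar)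
      obtain ⟨δ, hδpos, hδ⟩ : ∃ δ > 0, ∀ ζ ∈ Set.Ico 0 rbar, |ζ - rbar| < δ → M ≤ p ζ := by
        have h := hp_tend.eventually (eventually_ge_atTop M)
        rw [eventually_iff, Metric.mem_nhdsWithin_iff] at h
        obtain ⟨δ, hδ, h⟩ := h
        exact ⟨δ, hδ, fun ζ hζ hd => h ⟨by simpa [Real.dist_eq] using hd, hζ⟩⟩
      -- Chebyshev : μ {ρn n > rbar - δ} ≤ ofReal ε  uniformly in n
      have hcheb : ∀ n, μ {x | rbar - δ < ρn n x} ≤ ENNReal.ofReal ε := by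
        intro n
        set T := {x | rbar - δ < ρn n x} with hTdef
        have hT : MeasurableSet T := measurableSet_lt measurable_const (hρn_meas n)
        have key : ∀ᵐ x ∂μ, T.indicator (fun _ => ENNReal.ofReal (M ^ β)) x
            ≤ ENNReal.ofReal (|p (ρn n x)| ^ β) := by
          filter_upwards [hρn_bdd n] with x hx
          by_cases hxT : x ∈ T
          · rw [Set.indicator_of_mem hxT]
            apply ENNReal.ofReal_le_ofReal
            have hmem : ρn n x ∈ Set.Ico 0 rbar := ⟨hx.1, hx.2⟩
            have hdist : |ρn n x - rbar| < δ := by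
              rw [abs_sub_lt_iff]
              have := hxT
              simp only [hTdef, Set.mem_setOf_eq] at this
              constructor <;> linarith [hx.2]
            have hMp : M ≤ |p (ρn n x)| := le_trans (hδ _ hmem hdist) (le_abs_self _)
            exact Real.rpow_le_rpow (by linarith) hMp hβ0.le
          · simp [Set.indicator_of_notMem hxT]
        have h1 : ENNReal.ofReal (M ^ β) * μ T ≤ ENNReal.ofReal C := by
          calc ENNReal.ofReal (M ^ β) * μ T
              = ∫⁻ x, T.indicator (fun _ => ENNReal.ofReal (M ^ β)) x ∂μ :=
                (lintegral_indicator_const hT _).symm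
            _ ≤ ∫⁻ x, ENNReal.ofReal (|p (ρn n x)| ^ β) ∂μ := lintegral_mono_ae key
            _ ≤ ENNReal.ofReal C := hbound n
        have h2 : μ T ≤ ENNReal.ofReal C / ENNReal.ofReal (M ^ β) := by
          rw [ENNReal.le_div_iff_mul_le (Or.inl (by simp [hMβpos]))
            (Or.inl ENNReal.ofReal_ne_top), mul_comm]
          exact h1
        calc μ T ≤ ENNReal.ofReal C / ENNReal.ofReal (M ^ β) := h2
          _ = ENNReal.ofReal (C / M ^ β) := (ENNReal.ofReal_div_of_pos hMβpos).symm
          _ ≤ ENNReal.ofReal ε := ENNReal.ofReal_le_ofReal hCε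
      -- Markov : δ * μ(S n).toReal ≤ rbar * t - ∫_A ρn
      set S : ℕ → Set Ω := fun n => A ∩ {x | ρn n x ≤ rbar - δ} with hSdef
      have hSmeas : ∀ n, MeasurableSet (S n) :=
        fun n => hA.inter (measurableSet_le (hρn_meas n) measurable_const)
      have hSsub : ∀ n, S n ⊆ A := fun n => Set.inter_subset_left
      have hmark : ∀ n, δ * (μ (S n)).toReal ≤ rbar * t - ∫ x in A, ρn n x ∂μ := by
        intro n
        have hintA : IntegrableOn (fun x => rbar - ρn n x) A μ :=
          ((integrable_const rbar).sub (hρn_int n)).integrableOn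
        calc δ * (μ (S n)).toReal = ∫ _x in S n, δ ∂μ := by
              rw [setIntegral_const, smul_eq_mul, mul_comm, measureReal_def]
          _ ≤ ∫ x in S n, (rbar - ρn n x) ∂μ := by
              refine setIntegral_mono_on
                (integrableOn_const (measure_ne_top μ _))
                (hintA.mono_set (hSsub n)) (hSmeas n) (fun x hx => ?_)
              have := hx.2
              simp only [Set.mem_setOf_eq] at this
              linarith
          _ ≤ ∫ x in A, (rbar - ρn n x) ∂μ := by
              refine setIntegral_mono_set hintA ?_ ((hSsub n).eventuallyLE)
              exact ae_restrict_of_ae ((hρn_bdd n).mono fun x hx => by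
                simp only [Pi.zero_apply]; linarith [hx.2])
          _ = rbar * t - ∫ x in A, ρn n x ∂μ := by
              rw [integral_sub (integrable_const rbar).integrableOn
                (hρn_int n).integrableOn, setIntegral_const, smul_eq_mul, mul_comm, measureReal_def]
      -- A ⊆ S n ∪ T n
      have hcover : ∀ n, t ≤ (μ (S n)).toReal + ε := by
        intro n
        have hsub : A ⊆ S n ∪ {x | rbar - δ < ρn n x} := by
          intro x hx
          by_cases hc : ρn n x ≤ rbar - δ
          · exact Or.inl ⟨hx, hc⟩
          · exact Or.inr (by simpa using lt_of_not_ge hc)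
        have h1 : μ A ≤ μ (S n) + ENNReal.ofReal ε :=
          le_trans (measure_mono hsub)
            (le_trans (measure_union_le _ _) (add_le_add le_rfl (hcheb n)))
        have h2 := ENNReal.toReal_mono
          (ENNReal.add_ne_top.2 ⟨measure_ne_top μ _, ENNReal.ofReal_ne_top⟩) h1
        rw [ENNReal.toReal_add (measure_ne_top μ _) ENNReal.ofReal_ne_top,
          ENNReal.toReal_ofReal hε.le] at h2
        exact h2
      -- for large n, rbar * t - ∫_A ρn < δ * ε
      have hev : ∀ᶠ n in atTop, rbar * t - ∫ x in A, ρn n x ∂μ < δ * ε := by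
        have h0 : Tendsto (fun n => rbar * t - ∫ x in A, ρn n x ∂μ) atTop (nhds 0) := by
          have := (tendsto_const_nhds (x := rbar * t) (f := atTop (α := ℕ))).sub htend
          simpa using this
        exact h0.eventually_lt_const (by positivity)
      obtain ⟨n, hn⟩ := hev.exists
      have hμS : (μ (S n)).toReal ≤ ε := by
        have := hmark n
        nlinarith
      linarith [hcover n]
    have ht : t = 0 := by
      have h1 : t ≤ 0 := by
        refine le_of_forall_pos_le_add (fun ε hε => ?_)
        have := hmain (ε/2) (by linarith)
        linarith
      linarith
    rcases (ENNReal.toReal_eq_zero_iff _).1 ht with h | h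
    · exact h
    · exact absurd h (measure_ne_top μ A)
  -- combine
  rw [ae_iff]
  refine measure_mono_null (fun x hx => ?_)
    (measure_union_null hnull_neg (measure_union_null hnull_gt hnull_eq))
  simp only [Set.mem_setOf_eq, not_and_or, not_le, not_lt] at hx
  rcases hx with hx | hx
  · exact Or.inl hx
  · rcases lt_or_eq_of_le hx with h | h
    · exact Or.inr (Or.inl h)
    · exact Or.inr (Or.inr h.symm)
end

section
/- Let (Ω, μ) be a finite measure space, let ρ̄ > 0, β ∈ (1, ∞), and let p : [0, ρ̄) → ℝ be continuous, nondecreasing, and satisfy p(ζ) → +∞ as ζ → ρ̄⁻. Let (ρ_n) be a sequence of measurable functions on Ω with 0 ≤ ρ_n(x) < ρ̄ for μ-a.e. x, such that sup_n ∫_Ω |p(ρ_n)|^β dμ ≤ C for some constant C. Suppose that ρ_n converges to a measurable function ρ weak-* in L^∞(Ω), that p(ρ_n) converges weakly in L^β(Ω) to a function P̄ (i.e. ∫_Ω p(ρ_n) g dμ → ∫_Ω P̄ g dμ for every g ∈ L^{β'}(Ω), β' the conjugate exponent), and that ρ_n·p(ρ_n) converges weakly in L^β(Ω) to a function Q. If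 in addition Q = ρ·P̄ μ-a.e. in Ω, then P̄ = p(ρ) μ-a.e. in Ω. -/
open MeasureTheory Filter
open scoped ENNReal NNReal

lemma null_of_setIntegral_nonneg {Ω : Type*} [MeasurableSpace Ω] {μ : Measure Ω} {f : Ω → ℝ}
    {S : Set Ω} (hS : MeasurableSet S) (hneg : ∀ x ∈ S, f x < 0)
    (hint : IntegrableOn f S μ) (h : 0 ≤ ∫ x in S, f x ∂μ) : μ S = 0 := by
  have hle : ∫ x in S, f x ∂μ ≤ 0 :=
    setIntegral_nonpos hS fun x hx => (hneg x hx).le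
  have heq : ∫ x in S, (fun x => -f x) x ∂μ = 0 := by
    rw [integral_neg]; linarith [le_antisymm hle h]
  have hnn : 0 ≤ᵐ[μ.restrict S] fun x => -f x := by
    filter_upwards [ae_restrict_mem hS] with x hx
    simp only [Pi.zero_apply]
    linarith [hneg x hx]
  have hz : (fun x => -f x) =ᵐ[μ.restrict S] 0 :=
    (integral_eq_zero_iff_of_nonneg_ae hnn hint.neg).mp heq
  have : μ.restrict S {x | ¬ (-f x = (0:ℝ))} = 0 := by
    have := ae_iff.mp hz
    simpa using this
  have hsub : S ⊆ {x | ¬ (-f x = (0:ℝ))} := fun x hx => by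
    simp only [Set.mem_setOf_eq]; intro hc; linarith [hneg x hx]
  have := measure_mono_null (μ := μ.restrict S) hsub this
  rwa [Measure.restrict_apply_self] at this

/-- Lemma 2.4 (second assertion): identification of the weak limit of the pressure,
assuming the weak limit of `ρ_n · p(ρ_n)` equals `ρ · P̄`. -/
theorem stmt1
    {Ω : Type*} [MeasurableSpace Ω] (μ : Measure Ω) [IsFiniteMeasure μ]
    (rbar : ℝ) (hrbar : 0 < rbar) (β β' : ℝ) (hβ : 1 < β) (hβ' : 1 / β + 1 / β' = 1)
    (p : ℝ → ℝ)
    (hp_cont : ContinuousOn p (Set.Ico 0 rbar))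
    (hp_mono : MonotoneOn p (Set.Ico 0 rbar))
    (hp_tend : Tendsto p (nhdsWithin rbar (Set.Ico 0 rbar)) atTop)
    (ρn : ℕ → Ω → ℝ) (hρn_meas : ∀ n, Measurable (ρn n))
    (hρn_bdd : ∀ n, ∀ᵐ x ∂μ, 0 ≤ ρn n x ∧ ρn n x < rbar)
    (C : ℝ)
    (hbound : ∀ n, ∫⁻ x, ENNReal.ofReal (|p (ρn n x)| ^ β) ∂μ ≤ ENNReal.ofReal C)
    (ρ : Ω → ℝ) (hρ_meas : Measurable ρ)
    (hweak : ∀ g : Ω → ℝ, Integrable g μ →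
      Tendsto (fun n => ∫ x, ρn n x * g x ∂μ) atTop (nhds (∫ x, ρ x * g x ∂μ)))
    (P : Ω → ℝ) (hP_meas : Measurable P) (hP_mem : MemLp P (ENNReal.ofReal β) μ)
    (hweakP : ∀ g : Ω → ℝ, MemLp g (ENNReal.ofReal β') μ →
      Tendsto (fun n => ∫ x, p (ρn n x) * g x ∂μ) atTop (nhds (∫ x, P x * g x ∂μ)))
    (Q : Ω → ℝ) (hQ_meas : Measurable Q) (hQ_mem : MemLp Q (ENNReal.ofReal β) μ)
    (hweakQ : ∀ g : Ω → ℝ, MemLp g (ENNReal.ofReal β') μ →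
      Tendsto (fun n => ∫ x, ρn n x * p (ρn n x) * g x ∂μ) atTop
        (nhds (∫ x, Q x * g x ∂μ)))
    (hQP : Q =ᵐ[μ] fun x => ρ x * P x) :
    P =ᵐ[μ] fun x => p (ρ x) := by
  classical
  have hβpos : (0:ℝ) < β := lt_trans one_pos hβ
  have hβ'pos : (0:ℝ) < β' := by
    by_contra h
    push_neg at h
    have h1 : 1 / β < 1 := by
      rw [div_lt_one hβpos]; exact hβ
    have h2 : 1 / β' ≤ 0 := div_nonpos_of_nonneg_of_nonpos one_pos.le h
    linarith
  -- truncation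
  set T : ℝ → ℝ := fun t => if t ∈ Set.Ico (0:ℝ) rbar then t else 0 with hT_def
  have hT_meas : Measurable T := Measurable.ite measurableSet_Ico measurable_id measurable_const
  have h0mem : (0:ℝ) ∈ Set.Ico (0:ℝ) rbar := ⟨le_refl 0, hrbar⟩
  have hT_mem : ∀ t, T t ∈ Set.Ico (0:ℝ) rbar := by
    intro t
    simp only [hT_def]
    split_ifs with h
    · exact h
    · exact h0mem
  have hT_eq : ∀ t, t ∈ Set.Ico (0:ℝ) rbar → T t = t := by
    intro t h
    simp only [hT_def]
    rw [if_pos h]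
  have hrest : Continuous ((Set.Ico (0:ℝ) rbar).restrict p) :=
    continuousOn_iff_continuous_restrict.mp hp_cont
  have hpT_meas : Measurable fun t => p (T t) := by
    have h1 : Measurable fun t => ((Set.Ico (0:ℝ) rbar).restrict p) ⟨T t, hT_mem t⟩ :=
      hrest.measurable.comp (Measurable.subtype_mk hT_meas)
    exact h1
  -- measurable versions
  set pn : ℕ → Ω → ℝ := fun n x => p (T (ρn n x)) with hpn_def
  have hpn_meas : ∀ n, Measurable (pn n) := fun n => hpT_meas.comp (hρn_meas n)
  have hpn_ae : ∀ n, (fun x => p (ρn n x)) =ᵐ[μ] pn n := by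
    intro n
    filter_upwards [hρn_bdd n] with x hx
    rw [hpn_def]; simp only []
    rw [hT_eq _ ⟨hx.1, hx.2⟩]
  -- membership and integrability of p ∘ ρn
  have hpρn_aesm : ∀ n, AEStronglyMeasurable (fun x => p (ρn n x)) μ := fun n =>
    (aemeasurable_congr (hpn_ae n)).mpr (hpn_meas n).aemeasurable |>.aestronglyMeasurable
  have hpρn_mem : ∀ n, MemLp (fun x => p (ρn n x)) (ENNReal.ofReal β) μ := by
    intro n
    refine ⟨hpρn_aesm n, ?_⟩
    rw [eLpNorm_eq_lintegral_rpow_enorm_toReal (by simp [hβpos]) (by simp)]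
    have htR : (ENNReal.ofReal β).toReal = β := ENNReal.toReal_ofReal hβpos.le
    rw [htR]
    have hkey : ∫⁻ x, ‖p (ρn n x)‖ₑ ^ β ∂μ ≤ ENNReal.ofReal C := by
      calc ∫⁻ x, ‖p (ρn n x)‖ₑ ^ β ∂μ
          = ∫⁻ x, ENNReal.ofReal (|p (ρn n x)| ^ β) ∂μ := by
            apply lintegral_congr
            intro x
            rw [Real.enorm_eq_ofReal_abs, ← ENNReal.ofReal_rpow_of_nonneg (abs_nonneg _) hβpos.le]
        _ ≤ ENNReal.ofReal C := hbound n
    exact ENNReal.rpow_lt_top_of_nonneg (by positivity)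
      (lt_of_le_of_lt hkey ENNReal.ofReal_lt_top).ne
  have hone_le : (1:ℝ≥0∞) ≤ ENNReal.ofReal β := ENNReal.one_le_ofReal.mpr hβ.le
  have hpρn_int : ∀ n, Integrable (fun x => p (ρn n x)) μ := fun n =>
    (hpρn_mem n).integrable hone_le
  have hρn_int : ∀ n, Integrable (ρn n) μ := by
    intro n
    refine (MemLp.of_bound (hρn_meas n).aestronglyMeasurable rbar ?_).integrable
      (le_refl (1:ℝ≥0∞))
    filter_upwards [hρn_bdd n] with x hx
    rw [Real.norm_eq_abs, abs_of_nonneg hx.1]; exact hx.2.le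
  have hρnpρn_int : ∀ n, Integrable (fun x => ρn n x * p (ρn n x)) μ := by
    intro n
    refine (hpρn_int n).bdd_mul (c := rbar) (hρn_meas n).aestronglyMeasurable ?_
    filter_upwards [hρn_bdd n] with x hx
    rw [Real.norm_eq_abs, abs_of_nonneg hx.1]; exact hx.2.le
  have hP_int : Integrable P μ := hP_mem.integrable hone_le
  -- indicator facts
  have hind_int : ∀ S : Set Ω, MeasurableSet S →
      Integrable (S.indicator fun _ => (1:ℝ)) μ := by
    intro S hS
    rw [integrable_indicator_iff hS]
    exact integrableOn_const (measure_ne_top μ S)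
  have hind_mem : ∀ S : Set Ω, MeasurableSet S →
      MemLp (S.indicator fun _ => (1:ℝ)) (ENNReal.ofReal β') μ := by
    intro S hS
    refine MemLp.of_bound ((hind_int S hS).aestronglyMeasurable) 1 ?_
    filter_upwards with x
    by_cases h : x ∈ S <;> simp [h]
  have hind_mul : ∀ (f : Ω → ℝ) (S : Set Ω), MeasurableSet S →
      ∫ x, f x * (S.indicator fun _ => (1:ℝ)) x ∂μ = ∫ x in S, f x ∂μ := by
    intro f S hS
    rw [← integral_indicator hS]
    apply integral_congr_ae
    filter_upwards with x
    by_cases h : x ∈ S <;> simp [h]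
  -- set-integral limits
  have hlim0 : ∀ S : Set Ω, MeasurableSet S →
      Tendsto (fun n => ∫ x in S, ρn n x ∂μ) atTop (nhds (∫ x in S, ρ x ∂μ)) := by
    intro S hS
    have := hweak _ (hind_int S hS)
    simp only [hind_mul _ S hS] at this
    exact this
  have hlimP : ∀ S : Set Ω, MeasurableSet S →
      Tendsto (fun n => ∫ x in S, p (ρn n x) ∂μ) atTop (nhds (∫ x in S, P x ∂μ)) := by
    intro S hS
    have := hweakP _ (hind_mem S hS)
    simp only [hind_mul _ S hS] at this
    exact this
  have hlimQ : ∀ S : Set Ω, MeasurableSet S →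
      Tendsto (fun n => ∫ x in S, ρn n x * p (ρn n x) ∂μ) atTop
        (nhds (∫ x in S, Q x ∂μ)) := by
    intro S hS
    have := hweakQ _ (hind_mem S hS)
    simp only [hind_mul _ S hS] at this
    exact this
  -- Step 1a : 0 ≤ ρ a.e.
  have hρ_nonneg : ∀ᵐ x ∂μ, 0 ≤ ρ x := by
    have hm : ∀ m : ℕ, μ {x | ρ x < 0 ∧ -(m:ℝ) ≤ ρ x} = 0 := by
      intro m
      set S := {x | ρ x < 0 ∧ -(m:ℝ) ≤ ρ x} with hSdef
      have hS : MeasurableSet S := by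
        have : S = {x | ρ x < 0} ∩ {x | -(m:ℝ) ≤ ρ x} := rfl
        rw [this]
        exact (measurableSet_lt hρ_meas measurable_const).inter
          (measurableSet_le measurable_const hρ_meas)
      refine null_of_setIntegral_nonneg hS (fun x hx => hx.1) ?_ ?_
      · refine Measure.integrableOn_of_bounded (M := (m:ℝ)) (measure_ne_top μ S)
          hρ_meas.aestronglyMeasurable ?_
        filter_upwards [ae_restrict_mem hS] with x hx
        rw [Real.norm_eq_abs, abs_of_nonpos hx.1.le]
        linarith [hx.2]
      · refine ge_of_tendsto' (hlim0 S hS) ?_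
        intro n
        refine setIntegral_nonneg_of_ae ?_
        filter_upwards [hρn_bdd n] with x hx
        simpa using hx.1
    have hsub : {x | ρ x < 0} ⊆ ⋃ m : ℕ, {x | ρ x < 0 ∧ -(m:ℝ) ≤ ρ x} := by
      intro x hx
      obtain ⟨m, hm'⟩ := exists_nat_ge (-ρ x)
      exact Set.mem_iUnion.mpr ⟨m, hx, by linarith⟩
    have hnull := measure_mono_null hsub (measure_iUnion_null hm)
    rw [ae_iff]
    simpa [not_le] using hnull
  -- Step 1b : ρ ≤ rbar a.e.
  have hρ_le : ∀ᵐ x ∂μ, ρ x ≤ rbar := by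
    have hm : ∀ m : ℕ, μ {x | rbar < ρ x ∧ ρ x ≤ (m:ℝ)} = 0 := by
      intro m
      set S := {x | rbar < ρ x ∧ ρ x ≤ (m:ℝ)} with hSdef
      have hS : MeasurableSet S := by
        have : S = {x | rbar < ρ x} ∩ {x | ρ x ≤ (m:ℝ)} := rfl
        rw [this]
        exact (measurableSet_lt measurable_const hρ_meas).inter
          (measurableSet_le hρ_meas measurable_const)
      have hρS_int : IntegrableOn ρ S μ := by
        refine Measure.integrableOn_of_bounded (M := (m:ℝ)) (measure_ne_top μ S)
          hρ_meas.aestronglyMeasurable ?_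
        filter_upwards [ae_restrict_mem hS] with x hx
        rw [Real.norm_eq_abs, abs_of_nonneg (by linarith [hx.1])]
        exact hx.2
      refine null_of_setIntegral_nonneg hS (f := fun x => rbar - ρ x)
        (fun x hx => by simpa using hx.1) ?_ ?_
      · exact (integrableOn_const (measure_ne_top μ S)).sub hρS_int
      · have hc : IntegrableOn (fun _ : Ω => rbar) S μ :=
          integrableOn_const (measure_ne_top μ S)
        rw [integral_sub hc hρS_int, setIntegral_const, smul_eq_mul, sub_nonneg]
        refine le_of_tendsto (hlim0 S hS) (Eventually.of_forall fun n => ?_)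
        have hle : (ρn n) ≤ᵐ[μ] fun _ => rbar := by
          filter_upwards [hρn_bdd n] with x hx using hx.2.le
        calc ∫ x in S, ρn n x ∂μ ≤ ∫ x in S, rbar ∂μ :=
              setIntegral_mono_ae (hρn_int n).integrableOn hc hle
          _ = (μ S).toReal * rbar := by rw [setIntegral_const, smul_eq_mul, measureReal_def]
    have hsub : {x | rbar < ρ x} ⊆ ⋃ m : ℕ, {x | rbar < ρ x ∧ ρ x ≤ (m:ℝ)} := by
      intro x hx
      obtain ⟨m, hm'⟩ := exists_nat_ge (ρ x)
      exact Set.mem_iUnion.mpr ⟨m, hx, hm'⟩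
    have hnull := measure_mono_null hsub (measure_iUnion_null hm)
    rw [ae_iff]
    simpa [not_le] using hnull
  -- Step 1c : ρ < rbar a.e.
  have hρ_lt : ∀ᵐ x ∂μ, ρ x < rbar := by
    set A := {x | ρ x = rbar} with hAdef
    have hA : MeasurableSet A := hρ_meas (measurableSet_singleton rbar)
    have hρA_int : IntegrableOn ρ A μ := by
      refine Measure.integrableOn_of_bounded (M := rbar) (measure_ne_top μ A)
        hρ_meas.aestronglyMeasurable ?_
      filter_upwards [ae_restrict_mem hA] with x hx
      rw [Real.norm_eq_abs, Set.mem_setOf_eq.mp hx, abs_of_pos hrbar]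
    have hcA : IntegrableOn (fun _ : Ω => rbar) A μ :=
      integrableOn_const (measure_ne_top μ A)
    have hintA : ∫ x in A, (rbar - ρ x) ∂μ = 0 := by
      have hzero : ∀ᵐ x ∂μ.restrict A, rbar - ρ x = 0 := by
        filter_upwards [ae_restrict_mem hA] with x hx
        rw [Set.mem_setOf_eq.mp hx, sub_self]
      rw [integral_congr_ae hzero]
      simp
    have htendA : Tendsto (fun n => ∫ x in A, (rbar - ρn n x) ∂μ) atTop (nhds 0) := by
      have h1 : ∀ n, ∫ x in A, (rbar - ρn n x) ∂μ
          = rbar * (μ A).toReal - ∫ x in A, ρn n x ∂μ := by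
        intro n
        rw [integral_sub hcA (hρn_int n).integrableOn, setIntegral_const, smul_eq_mul, mul_comm, measureReal_def]
      have h2 : rbar * (μ A).toReal - ∫ x in A, ρ x ∂μ = 0 := by
        rw [← hintA, integral_sub hcA hρA_int, setIntegral_const, smul_eq_mul, mul_comm, measureReal_def]
      simp only [h1]
      rw [← h2]
      exact tendsto_const_nhds.sub (hlim0 A hA)
    have hmain : ∀ ε : ℝ, 0 < ε → (μ A).toReal ≤ ε := by
      intro ε hε
      obtain ⟨M, hMβ, hM1⟩ :=
        (((tendsto_rpow_atTop hβpos).eventually_ge_atTop ((|C| + 1)/ε)).and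
          (eventually_ge_atTop 1)).exists
      have hMpos : (0:ℝ) < M := lt_of_lt_of_le one_pos hM1
      have hMβpos : (0:ℝ) < M ^ β := Real.rpow_pos_of_pos hMpos β
      have hCM : C / M ^ β < ε := by
        rw [div_lt_iff₀ hMβpos]
        have h4 : |C| + 1 ≤ M ^ β * ε := by rwa [div_le_iff₀ hε] at hMβ
        nlinarith [le_abs_self C]
      have hev : ∀ᶠ ζ in nhdsWithin rbar (Set.Ico 0 rbar), M ≤ p ζ :=
        hp_tend.eventually_ge_atTop M
      obtain ⟨δ, hδpos, hδ⟩ := Metric.mem_nhdsWithin_iff.mp hev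
      set Bn : ℕ → Set Ω := fun n => {x | M ≤ |pn n x|} with hBdef
      have hBmeas : ∀ n, MeasurableSet (Bn n) := by
        intro n
        exact measurableSet_le measurable_const (by fun_prop)
      have hcheb : ∀ n, (μ (Bn n)).toReal ≤ ε := by
        intro n
        have hfm : Measurable fun x => ENNReal.ofReal (|pn n x| ^ β) := by fun_prop
        have hsub : Bn n ⊆ {x | ENNReal.ofReal (M ^ β) ≤ ENNReal.ofReal (|pn n x| ^ β)} := by
          intro x hx
          simp only [Set.mem_setOf_eq] at hx ⊢
          exact ENNReal.ofReal_le_ofReal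
            (Real.rpow_le_rpow hMpos.le hx hβpos.le)
        have hlint : ∫⁻ x, ENNReal.ofReal (|pn n x| ^ β) ∂μ ≤ ENNReal.ofReal C := by
          have hcongr : (fun x => ENNReal.ofReal (|pn n x| ^ β))
              =ᵐ[μ] fun x => ENNReal.ofReal (|p (ρn n x)| ^ β) := by
            filter_upwards [hpn_ae n] with x hx
            rw [hx]
          rw [lintegral_congr_ae hcongr]
          exact hbound n
        have h5 := meas_ge_le_lintegral_div (μ := μ) hfm.aemeasurable
          (ε := ENNReal.ofReal (M ^ β)) (ENNReal.ofReal_pos.mpr hMβpos).ne'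
          ENNReal.ofReal_ne_top
        have h6 : μ (Bn n) ≤ ENNReal.ofReal C / ENNReal.ofReal (M ^ β) :=
          le_trans (measure_mono hsub) (le_trans h5 (ENNReal.div_le_div_right hlint _))
        have h7 : μ (Bn n) ≤ ENNReal.ofReal ε := by
          rw [← ENNReal.ofReal_div_of_pos hMβpos] at h6
          exact le_trans h6 (ENNReal.ofReal_le_ofReal hCM.le)
        exact ENNReal.toReal_le_of_le_ofReal hε.le h7
      have hineq : ∀ n, (μ A).toReal
          ≤ (μ (Bn n)).toReal + (1/δ) * ∫ x in A, (rbar - ρn n x) ∂μ := by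
        intro n
        have haept : ∀ᵐ x ∂μ, A.indicator (fun _ => (1:ℝ)) x
            ≤ (Bn n).indicator (fun _ => (1:ℝ)) x
              + (rbar - ρn n x)/δ * A.indicator (fun _ => (1:ℝ)) x := by
          filter_upwards [hρn_bdd n] with x hx
          have hTx : T (ρn n x) = ρn n x := hT_eq _ ⟨hx.1, hx.2⟩
          by_cases hxA : x ∈ A
          · rw [Set.indicator_of_mem hxA]
            by_cases hxB : x ∈ Bn n
            · rw [Set.indicator_of_mem hxB]
              have hd : 0 ≤ (rbar - ρn n x)/δ := div_nonneg (by linarith [hx.2]) hδpos.le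
              nlinarith
            · rw [Set.indicator_of_notMem hxB]
              have hnotB : ¬ M ≤ |pn n x| := hxB
              have h8 : ρn n x ∉ Metric.ball rbar δ := by
                intro hball
                apply hnotB
                have hMp : M ≤ p (ρn n x) := hδ ⟨hball, hx.1, hx.2⟩
                calc M ≤ p (ρn n x) := hMp
                  _ ≤ |p (ρn n x)| := le_abs_self _
                  _ = |pn n x| := by rw [hpn_def]; simp only []; rw [hTx]
              rw [Metric.mem_ball, Real.dist_eq, not_lt,
                abs_of_nonpos (by linarith [hx.2])] at h8
              have h9 : 1 ≤ (rbar - ρn n x)/δ := (one_le_div hδpos).mpr (by linarith)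
              nlinarith
          · rw [Set.indicator_of_notMem hxA]
            have h10 : (0:ℝ) ≤ (Bn n).indicator (fun _ => (1:ℝ)) x :=
              Set.indicator_nonneg (fun _ _ => zero_le_one) x
            rw [mul_zero, add_zero]
            exact h10
        have h11 : Integrable
            (fun x => (rbar - ρn n x)/δ * A.indicator (fun _ => (1:ℝ)) x) μ := by
          refine Integrable.bdd_mul (c := rbar/δ) (hind_int A hA)
            (((measurable_const.sub (hρn_meas n)).div_const δ).aestronglyMeasurable) ?_
          filter_upwards [hρn_bdd n] with x hx
          rw [Real.norm_eq_abs, abs_div, abs_of_pos hδpos]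
          have : |rbar - ρn n x| ≤ rbar := abs_le.mpr ⟨by linarith [hx.2], by linarith [hx.1]⟩
          gcongr
        have h12 : Integrable (fun x => (Bn n).indicator (fun _ => (1:ℝ)) x
            + (rbar - ρn n x)/δ * A.indicator (fun _ => (1:ℝ)) x) μ :=
          (hind_int _ (hBmeas n)).add h11
        have h13 := integral_mono_ae (hind_int A hA) h12 haept
        have hLHS : ∫ x, A.indicator (fun _ => (1:ℝ)) x ∂μ = (μ A).toReal := by
          rw [integral_indicator_const (1:ℝ) hA, smul_eq_mul, mul_one, measureReal_def]
        have hRHS : ∫ x, ((Bn n).indicator (fun _ => (1:ℝ)) x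
            + (rbar - ρn n x)/δ * A.indicator (fun _ => (1:ℝ)) x) ∂μ
            = (μ (Bn n)).toReal + (1/δ) * ∫ x in A, (rbar - ρn n x) ∂μ := by
          rw [integral_add (hind_int _ (hBmeas n)) h11]
          congr 1
          · rw [integral_indicator_const (1:ℝ) (hBmeas n), smul_eq_mul, mul_one, measureReal_def]
          · rw [hind_mul _ A hA, ← integral_const_mul]
            apply integral_congr_ae
            filter_upwards with x
            ring
        rw [hLHS, hRHS] at h13
        exact h13
      have hfinal : Tendsto (fun n => ε + (1/δ) * ∫ x in A, (rbar - ρn n x) ∂μ)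
          atTop (nhds (ε + (1/δ) * 0)) :=
        tendsto_const_nhds.add (htendA.const_mul (1/δ))
      have h14 : (μ A).toReal ≤ ε + (1/δ) * 0 :=
        ge_of_tendsto' hfinal (fun n => by
          have ha := hineq n
          have hb := hcheb n
          linarith)
      linarith
    have h15 : (μ A).toReal ≤ 0 :=
      le_of_forall_pos_le_add (fun ε hε => by simpa using hmain ε hε)
    have h16 : μ A = 0 := by
      have h17 := le_antisymm h15 ENNReal.toReal_nonneg
      rcases (ENNReal.toReal_eq_zero_iff _).mp h17 with h | h
      · exact h
      · exact absurd h (measure_ne_top μ A)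
    have hAe : ∀ᵐ x ∂μ, ρ x ≠ rbar := by
      rw [ae_iff]
      simpa [hAdef] using h16
    filter_upwards [hρ_le, hAe] with x hx1 hx2
    exact lt_of_le_of_ne hx1 hx2
  have hρ_int : Integrable ρ μ := by
    refine (MemLp.of_bound hρ_meas.aestronglyMeasurable rbar ?_).integrable (le_refl (1:ℝ≥0∞))
    filter_upwards [hρ_nonneg, hρ_lt] with x h0 h1
    rw [Real.norm_eq_abs, abs_of_nonneg h0]; exact h1.le
  have hρP_int : Integrable (fun x => ρ x * P x) μ := by
    refine hP_int.bdd_mul (c := rbar) hρ_meas.aestronglyMeasurable ?_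
    filter_upwards [hρ_nonneg, hρ_lt] with x h0 h1
    rw [Real.norm_eq_abs, abs_of_nonneg h0]; exact h1.le
  -- split lemma
  have hsplit : ∀ (S : Set Ω), MeasurableSet S → ∀ (f g : Ω → ℝ) (a b : ℝ),
      Integrable f μ → Integrable g μ → Integrable (fun x => f x * g x) μ →
      ∫ x in S, (f x - a) * (g x - b) ∂μ =
        ∫ x in S, f x * g x ∂μ - a * ∫ x in S, g x ∂μ - b * ∫ x in S, f x ∂μ
          + a * b * (μ S).toReal := by
    intro S hS f g a b hf hg hfg
    have e1 : ∫ x in S, (f x - a) * (g x - b) ∂μ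
        = ∫ x in S, (f x * g x - a * g x - b * f x + a * b) ∂μ := by
      apply integral_congr_ae
      filter_upwards with x
      ring
    have hag : Integrable (fun x => a * g x) μ := hg.const_mul a
    have hbf : Integrable (fun x => b * f x) μ := hf.const_mul b
    have h1 : IntegrableOn (fun x => f x * g x - a * g x) S μ :=
      (hfg.sub hag).integrableOn
    have h2 : IntegrableOn (fun x => f x * g x - a * g x - b * f x) S μ :=
      ((hfg.sub hag).sub hbf).integrableOn
    have hc : IntegrableOn (fun _ => a * b) S μ :=
      integrableOn_const (measure_ne_top μ S)
    rw [e1, integral_add h2 hc, integral_sub h1 hbf.integrableOn,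
      integral_sub hfg.integrableOn hag.integrableOn,
      integral_const_mul, integral_const_mul, setIntegral_const, smul_eq_mul, measureReal_def]
    ring
  -- Step 2 : Minty for rational q
  have hminty : ∀ q : ℚ, 0 ≤ (q:ℝ) → (q:ℝ) < rbar →
      ∀ᵐ x ∂μ, 0 ≤ (ρ x - q) * (P x - p q) := by
    intro q hq0 hq1
    have hqmem : (q:ℝ) ∈ Set.Ico (0:ℝ) rbar := ⟨hq0, hq1⟩
    set S := {x | (ρ x - q) * (P x - p q) < 0} with hSdef
    have hS : MeasurableSet S :=
      measurableSet_lt ((hρ_meas.sub measurable_const).mul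
        (hP_meas.sub measurable_const)) measurable_const
    have hFint : Integrable (fun x => (ρ x - q) * (P x - p q)) μ := by
      have h1 : Integrable
          (fun x => ρ x * P x - (q:ℝ) * P x - p q * ρ x + (q:ℝ) * p q) μ :=
        ((hρP_int.sub (hP_int.const_mul q)).sub (hρ_int.const_mul (p q))).add
          (integrable_const _)
      exact h1.congr (Eventually.of_forall fun x => by ring)
    have hnn : ∀ n, 0 ≤ ∫ x in S, (ρn n x - q) * (p (ρn n x) - p q) ∂μ := by
      intro n
      refine setIntegral_nonneg_of_ae ?_
      filter_upwards [hρn_bdd n] with x hx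
      simp only [Pi.zero_apply]
      rcases le_total (ρn n x) (q:ℝ) with h | h
      · have hm := hp_mono ⟨hx.1, hx.2⟩ hqmem h
        nlinarith [hm]
      · have hm := hp_mono hqmem ⟨hx.1, hx.2⟩ h
        exact mul_nonneg (by linarith) (by linarith)
    have hlim : Tendsto (fun n => ∫ x in S, ρn n x * p (ρn n x) ∂μ
        - (q:ℝ) * ∫ x in S, p (ρn n x) ∂μ - p q * ∫ x in S, ρn n x ∂μ
        + (q:ℝ) * p q * (μ S).toReal) atTop
        (nhds (∫ x in S, Q x ∂μ - (q:ℝ) * ∫ x in S, P x ∂μ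
          - p q * ∫ x in S, ρ x ∂μ + (q:ℝ) * p q * (μ S).toReal)) :=
      (((hlimQ S hS).sub ((hlimP S hS).const_mul (q:ℝ))).sub
        ((hlim0 S hS).const_mul (p q))).add tendsto_const_nhds
    have hlimnn : 0 ≤ ∫ x in S, Q x ∂μ - (q:ℝ) * ∫ x in S, P x ∂μ
        - p q * ∫ x in S, ρ x ∂μ + (q:ℝ) * p q * (μ S).toReal := by
      refine ge_of_tendsto' hlim (fun n => ?_)
      rw [← hsplit S hS _ _ _ _ (hρn_int n) (hpρn_int n) (hρnpρn_int n)]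
      exact hnn n
    have hQeq : ∫ x in S, Q x ∂μ = ∫ x in S, ρ x * P x ∂μ :=
      integral_congr_ae (ae_restrict_of_ae hQP)
    have hFpos : 0 ≤ ∫ x in S, (ρ x - q) * (P x - p q) ∂μ := by
      rw [hsplit S hS ρ P (q:ℝ) (p q) hρ_int hP_int hρP_int, ← hQeq]
      exact hlimnn
    have hnull := null_of_setIntegral_nonneg hS (fun x hx => hx)
      hFint.integrableOn hFpos
    rw [ae_iff]
    simpa [not_le] using hnull
  -- Step 3 : P ≥ p 0 a.e.
  have hP0 : ∀ᵐ x ∂μ, p 0 ≤ P x := by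
    set S := {x | P x - p 0 < 0} with hSdef
    have hS : MeasurableSet S :=
      measurableSet_lt (hP_meas.sub measurable_const) measurable_const
    have hFint : Integrable (fun x => P x - p 0) μ := hP_int.sub (integrable_const _)
    have hc : IntegrableOn (fun _ : Ω => p 0) S μ :=
      integrableOn_const (measure_ne_top μ S)
    have hnn : ∀ n, 0 ≤ ∫ x in S, (p (ρn n x) - p 0) ∂μ := by
      intro n
      refine setIntegral_nonneg_of_ae ?_
      filter_upwards [hρn_bdd n] with x hx
      simp only [Pi.zero_apply]
      have hm := hp_mono h0mem ⟨hx.1, hx.2⟩ hx.1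
      linarith
    have hlim : Tendsto (fun n => ∫ x in S, p (ρn n x) ∂μ - ∫ x in S, (fun _ => p 0) x ∂μ)
        atTop (nhds (∫ x in S, P x ∂μ - ∫ x in S, (fun _ => p 0) x ∂μ)) :=
      (hlimP S hS).sub tendsto_const_nhds
    have hFpos : 0 ≤ ∫ x in S, (P x - p 0) ∂μ := by
      rw [integral_sub hP_int.integrableOn hc]
      refine ge_of_tendsto' hlim (fun n => ?_)
      rw [← integral_sub (hpρn_int n).integrableOn hc]
      exact hnn n
    have hnull := null_of_setIntegral_nonneg hS (fun x hx => hx)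
      hFint.integrableOn hFpos
    rw [ae_iff]
    have : {x | ¬ p 0 ≤ P x} = S := by
      ext x; simp [hSdef, not_le, sub_neg]
    rw [this]
    exact hnull
  -- Step 4 : conclusion
  have hae_all : ∀ᵐ x ∂μ, ∀ q : ℚ, 0 ≤ (q:ℝ) → (q:ℝ) < rbar →
      0 ≤ (ρ x - q) * (P x - p q) := by
    rw [ae_all_iff]
    intro q
    by_cases h1 : 0 ≤ (q:ℝ)
    · by_cases h2 : (q:ℝ) < rbar
      · filter_upwards [hminty q h1 h2] with x hx _ _; exact hx
      · filter_upwards with x _ h; exact absurd h h2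
    · filter_upwards with x h; exact absurd h h1
  filter_upwards [hρ_nonneg, hρ_lt, hae_all, hP0] with x h0 h1 hqx hP0x
  show P x = p (ρ x)
  have hmem : ρ x ∈ Set.Ico (0:ℝ) rbar := ⟨h0, h1⟩
  have hcw : ContinuousWithinAt p (Set.Ico 0 rbar) (ρ x) := hp_cont _ hmem
  refine le_antisymm ?_ ?_
  · -- P x ≤ p (ρ x)
    by_contra hc
    push_neg at hc
    have hev : p ⁻¹' Set.Iio (P x) ∈ nhdsWithin (ρ x) (Set.Ico 0 rbar) :=
      hcw (Iio_mem_nhds hc)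
    obtain ⟨ε, hεpos, hsub⟩ := Metric.mem_nhdsWithin_iff.mp hev
    obtain ⟨q, hq1, hq2⟩ := exists_rat_btwn (lt_min (by linarith : ρ x < ρ x + ε) h1)
    have hq0 : 0 ≤ (q:ℝ) := le_trans h0 hq1.le
    have hqr : (q:ℝ) < rbar := lt_of_lt_of_le hq2 (min_le_right _ _)
    have hqball : (q:ℝ) ∈ Metric.ball (ρ x) ε := by
      rw [Metric.mem_ball, Real.dist_eq, abs_of_nonneg (by linarith)]
      have := lt_of_lt_of_le hq2 (min_le_left _ _)
      linarith
    have hpq : p q < P x := hsub ⟨hqball, hq0, hqr⟩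
    have hprod := hqx q hq0 hqr
    nlinarith [mul_pos (sub_pos.mpr hq1) (sub_pos.mpr hpq)]
  · -- p (ρ x) ≤ P x
    rcases eq_or_lt_of_le h0 with h0' | h0'
    · rw [← h0']
      exact hP0x
    · by_contra hc
      push_neg at hc
      have hev : p ⁻¹' Set.Ioi (P x) ∈ nhdsWithin (ρ x) (Set.Ico 0 rbar) :=
        hcw (Ioi_mem_nhds hc)
      obtain ⟨ε, hεpos, hsub⟩ := Metric.mem_nhdsWithin_iff.mp hev
      obtain ⟨q, hq1, hq2⟩ := exists_rat_btwn (max_lt h0' (by linarith : ρ x - ε < ρ x))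
      have hq0 : 0 ≤ (q:ℝ) := le_trans (le_max_left _ _) hq1.le
      have hqr : (q:ℝ) < rbar := lt_trans hq2 h1
      have hqball : (q:ℝ) ∈ Metric.ball (ρ x) ε := by
        rw [Metric.mem_ball, Real.dist_eq, abs_of_nonpos (by linarith)]
        have := lt_of_le_of_lt (le_max_right (0:ℝ) (ρ x - ε)) hq1
        linarith
      have hpq : P x < p q := hsub ⟨hqball, hq0, hqr⟩
      have hprod := hqx q hq0 hqr
      nlinarith [mul_pos (sub_pos.mpr hq2) (sub_pos.mpr hpq)]
end

section
/- Let μ > 0, s > 0, ρ̄ > 0. Let p : (0, ρ̄) → ℝ be continuously differentiable with p'(ζ) > 0 for all ζ ∈ (0, ρ̄). Let h : ℝ → ℝ be a continuous 1-periodic function with h(y) > 0 for all y, and let ρ : ℝ → ℝ be a continuously differentiable 1-periodic function with 0 < ρ(y) < ρ̄ for all y. Suppose there exists λ ∈ ℝ such that for every y ∈ ℝ, (h(y)³/(12μ))·ρ(y)·(p ∘ ρ)'(y) = ρ(y)·h(y)·s/2 + λ. Then λ < 0. -/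
open Set

/-- The claim `λ < 0` in the uniqueness analysis of Section 3.3 of the paper, for the
once-integrated one-dimensional stationary compressible Reynolds equation (U3). -/
theorem stmt8
    (μ s rbar : ℝ) (hμ : 0 < μ) (hs : 0 < s) (hrbar : 0 < rbar)
    (p p' : ℝ → ℝ)
    (hp : ∀ ζ ∈ Ioo (0 : ℝ) rbar, HasDerivAt p (p' ζ) ζ)
    (hp'_cont : ContinuousOn p' (Ioo 0 rbar))
    (hp'_pos : ∀ ζ ∈ Ioo (0 : ℝ) rbar, 0 < p' ζ)
    (h : ℝ → ℝ) (hh_cont : Continuous h) (hh_per : ∀ y, h (y + 1) = h y)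
    (hh_pos : ∀ y, 0 < h y)
    (ρ : ℝ → ℝ) (hρ : ContDiff ℝ 1 ρ) (hρ_per : ∀ y, ρ (y + 1) = ρ y)
    (hρ_bdd : ∀ y, 0 < ρ y ∧ ρ y < rbar)
    (lam : ℝ)
    (heq : ∀ y, (h y) ^ 3 / (12 * μ) * ρ y * deriv (fun t => p (ρ t)) y
      = ρ y * h y * s / 2 + lam) :
    lam < 0 := by
  by_contra hlam
  push_neg at hlam
  have hρdiff : Differentiable ℝ ρ := hρ.differentiable one_ne_zero
  have hderiv : ∀ y, deriv (fun t => p (ρ t)) y = p' (ρ y) * deriv ρ y := by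
    intro y
    have hmem : ρ y ∈ Ioo (0:ℝ) rbar := ⟨(hρ_bdd y).1, (hρ_bdd y).2⟩
    exact ((hp (ρ y) hmem).comp y (hρdiff y).hasDerivAt).deriv
  have hρ' : ∀ y, 0 < deriv ρ y := by
    intro y
    have hmem : ρ y ∈ Ioo (0:ℝ) rbar := ⟨(hρ_bdd y).1, (hρ_bdd y).2⟩
    have hrhs : 0 < ρ y * h y * s / 2 + lam := by
      have : 0 < ρ y * h y * s / 2 := by
        have h1 := (hρ_bdd y).1
        have h2 := hh_pos y
        positivity
      linarith
    have he := heq y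
    rw [hderiv y] at he
    have hcoef : 0 < (h y) ^ 3 / (12 * μ) * ρ y * p' (ρ y) := by
      have h1 := hp'_pos (ρ y) hmem
      have h2 := hh_pos y
      have h3 := (hρ_bdd y).1
      positivity
    nlinarith [hp'_pos (ρ y) hmem, hh_pos y, (hρ_bdd y).1,
      mul_pos (div_pos (pow_pos (hh_pos y) 3) (by linarith : (0:ℝ) < 12 * μ)) (hρ_bdd y).1]
  have hmono : StrictMono ρ := strictMono_of_deriv_pos hρ'
  have : ρ 0 < ρ (0 + 1) := hmono (by norm_num)
  rw [hρ_per 0] at this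
  exact lt_irrefl _ this
end

section
/- Let μ > 0, s > 0 and λ < 0. Let h : ℝ → ℝ be a continuous 1-periodic function with h(y) > 0 for all y, and let p : (0, ∞) → ℝ be differentiable with p' continuous and p'(ζ) > 0 for all ζ > 0. Let ρ : ℝ → ℝ be a continuous, 1-periodic, nonnegative function, and suppose there is a locally integrable function g : ℝ → ℝ such that ρ(b) − ρ(a) = ∫_a^b g(y) dy for all a ≤ b, and such that for almost every y ∈ ℝ one has ρ(y) > 0 and g(y) = (6μs/h(y)² + 12μλ/(h(y)³·ρ(y)))·(1/p'(ρ(y))). Then ρ(y) > 0 for every y ∈ ℝ. -/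
open Set MeasureTheory

/-- Strict positivity of the limit density in Section 3.3 of the paper, from the
resolved form (U45) of the one-dimensional stationary compressible Reynolds equation. -/
theorem stmt9
    (μ s lam : ℝ) (hμ : 0 < μ) (hs : 0 < s) (hlam : lam < 0)
    (h : ℝ → ℝ) (hh_cont : Continuous h) (hh_per : ∀ y, h (y + 1) = h y)
    (hh_pos : ∀ y, 0 < h y)
    (p p' : ℝ → ℝ)
    (hp : ∀ ζ : ℝ, 0 < ζ → HasDerivAt p (p' ζ) ζ)
    (hp'_cont : ContinuousOn p' (Ioi 0))
    (hp'_pos : ∀ ζ : ℝ, 0 < ζ → 0 < p' ζ)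
    (ρ : ℝ → ℝ) (hρ_cont : Continuous ρ) (hρ_per : ∀ y, ρ (y + 1) = ρ y)
    (hρ_nonneg : ∀ y, 0 ≤ ρ y)
    (g : ℝ → ℝ) (hg : LocallyIntegrable g)
    (hftc : ∀ a b : ℝ, a ≤ b → ρ b - ρ a = ∫ y in a..b, g y)
    (hae : ∀ᵐ y ∂(volume : Measure ℝ), 0 < ρ y ∧
      g y = (6 * μ * s / (h y) ^ 2 + 12 * μ * lam / ((h y) ^ 3 * ρ y)) * (1 / p' (ρ y))) :
    ∀ y, 0 < ρ y := by
  by_contra hcon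
  push_neg at hcon
  obtain ⟨y₀, hy₀⟩ := hcon
  have hρ0 : ρ y₀ = 0 := le_antisymm hy₀ (hρ_nonneg y₀)
  -- bound h above
  have hper : Function.Periodic h 1 := hh_per
  have hcomp : IsCompact (range h) := hper.compact_of_continuous one_ne_zero hh_cont
  obtain ⟨M, hM⟩ := hcomp.bddAbove
  have hMb : ∀ y, h y ≤ M := fun y => hM (mem_range_self y)
  have hM0 : 0 < M := lt_of_lt_of_le (hh_pos 0) (hMb 0)
  set δ : ℝ := -2 * lam / (s * M) with hδdef
  have hδ : 0 < δ := div_pos (by linarith) (mul_pos hs hM0)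
  -- continuity: ρ < δ on some [y₀, y₀+ε]
  have hcont : ContinuousAt ρ y₀ := hρ_cont.continuousAt
  have : ∀ᶠ y in nhds y₀, ρ y < δ := by
    have := hcont.eventually_lt continuousAt_const (by rw [hρ0]; exact hδ)
    exact this
  obtain ⟨ε, hε, hball⟩ := Metric.eventually_nhds_iff.mp this
  set ε' := ε / 2 with hε'def
  have hε' : 0 < ε' := by positivity
  have hsmall : ∀ y ∈ Icc y₀ (y₀ + ε'), ρ y < δ := by
    intro y hy
    apply hball
    rw [Real.dist_eq, abs_lt]
    constructor <;> [skip; skip] <;>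
      · obtain ⟨h1, h2⟩ := hy; simp only [hε'def] at *; linarith
  -- key: ρ = 0 on [y₀, y₀+ε']
  have hzero : ∀ y ∈ Icc y₀ (y₀ + ε'), ρ y = 0 := by
    intro y hy
    refine le_antisymm ?_ (hρ_nonneg y)
    have hle : y₀ ≤ y := hy.1
    have hftc' := hftc y₀ y hle
    rw [hρ0, sub_zero] at hftc'
    rw [hftc', intervalIntegral.integral_of_le hle]
    apply setIntegral_nonpos_of_ae_restrict
    have hres : ∀ᵐ z ∂(volume.restrict (Ioc y₀ y)), 0 < ρ z ∧
        g z = (6 * μ * s / (h z) ^ 2 + 12 * μ * lam / ((h z) ^ 3 * ρ z)) * (1 / p' (ρ z)) :=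
      ae_restrict_of_ae hae
    have hmem : ∀ᵐ z ∂(volume.restrict (Ioc y₀ y)), z ∈ Ioc y₀ y :=
      ae_restrict_mem measurableSet_Ioc
    filter_upwards [hres, hmem] with z ⟨hρz, hgz⟩ hz
    have hzIcc : z ∈ Icc y₀ (y₀ + ε') := ⟨le_of_lt hz.1, le_trans hz.2 hy.2⟩
    have hρδ : ρ z < δ := hsmall z hzIcc
    have hH : 0 < h z := hh_pos z
    -- s * h z * ρ z < -2 * lam
    have hkey : s * h z * ρ z < -2 * lam := by
      have h1 : ρ z < -2 * lam / (s * h z) := by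
        calc ρ z < δ := hρδ
        _ ≤ -2 * lam / (s * h z) := by
          apply div_le_div_of_nonneg_left (by linarith) (by positivity)
          exact mul_le_mul_of_nonneg_left (hMb z) hs.le
      have := (lt_div_iff₀ (by positivity : (0:ℝ) < s * h z)).mp h1
      linarith [this]
    have hnum : 6 * μ * s * (h z * ρ z) + 12 * μ * lam < 0 := by nlinarith
    have hfac : 6 * μ * s / (h z) ^ 2 + 12 * μ * lam / ((h z) ^ 3 * ρ z)
        = (6 * μ * s * (h z * ρ z) + 12 * μ * lam) / ((h z) ^ 3 * ρ z) := by
      field_simp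
    have hA : 6 * μ * s / (h z) ^ 2 + 12 * μ * lam / ((h z) ^ 3 * ρ z) < 0 := by
      rw [hfac]
      exact div_neg_of_neg_of_pos hnum (by positivity)
    have hp' : 0 < 1 / p' (ρ z) := by
      have := hp'_pos (ρ z) hρz
      positivity
    rw [hgz]
    exact le_of_lt (mul_neg_of_neg_of_pos hA hp')
  -- contradiction with a.e. positivity
  have hnull : volume {y : ℝ | ¬ (0 < ρ y ∧
      g y = (6 * μ * s / (h y) ^ 2 + 12 * μ * lam / ((h y) ^ 3 * ρ y)) * (1 / p' (ρ y)))} = 0 := by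
    have h2 := hae; rw [ae_iff] at h2; exact h2
  have hsub : Icc y₀ (y₀ + ε') ⊆ {y : ℝ | ¬ (0 < ρ y ∧
      g y = (6 * μ * s / (h y) ^ 2 + 12 * μ * lam / ((h y) ^ 3 * ρ y)) * (1 / p' (ρ y)))} := by
    intro y hy
    simp only [mem_setOf_eq]
    intro ⟨hpos, _⟩
    rw [hzero y hy] at hpos
    exact lt_irrefl 0 hpos
  have hle := measure_mono (μ := (volume : Measure ℝ)) hsub
  rw [hnull, Real.volume_Icc] at hle
  have : (0:ℝ) < y₀ + ε' - y₀ := by linarith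
  rw [nonpos_iff_eq_zero, ENNReal.ofReal_eq_zero] at hle
  linarith
end

section
/- Let h : ℝ → ℝ be a continuous 1-periodic function with h(y) > 0 for all y. There do not exist differentiable 1-periodic functions ρ₁, ρ₂ : ℝ → ℝ such that ∫_0^1 h(y) ρ₁(y) dy = ∫_0^1 h(y) ρ₂(y) dy and such that ρ₁'(y) > ρ₂'(y) at every point y ∈ ℝ where ρ₁(y) = ρ₂(y). -/
open Set Filter Topology

/-- A differentiable 1-periodic function whose derivative is positive at every zero
has no zeros at all. -/
lemma no_zero_aux (g : ℝ → ℝ) (hg : Differentiable ℝ g)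
    (hper : ∀ y, g (y + 1) = g y)
    (hz : ∀ y, g y = 0 → 0 < deriv g y) : ∀ y, g y ≠ 0 := by
  intro y₀ hy₀
  have hcont : Continuous g := hg.continuous
  have hpos : 0 < deriv g y₀ := hz y₀ hy₀
  have hslope : Tendsto (slope g y₀) (𝓝[≠] y₀) (𝓝 (deriv g y₀)) :=
    hasDerivAt_iff_tendsto_slope.mp (hg y₀).hasDerivAt
  -- eventually g > 0 on the right of y₀
  have h1 : ∀ᶠ t in 𝓝[>] y₀, 0 < g t := by
    have hmono : 𝓝[>] y₀ ≤ 𝓝[≠] y₀ :=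
      nhdsWithin_mono _ (fun x hx => ne_of_gt hx)
    have h2 : ∀ᶠ t in 𝓝[>] y₀, 0 < slope g y₀ t :=
      (hslope.mono_left hmono).eventually (eventually_gt_nhds hpos)
    filter_upwards [h2, self_mem_nhdsWithin] with t ht ht'
    have hst : slope g y₀ t = g t / (t - y₀) := by
      rw [slope_def_field, hy₀, sub_zero]
    rw [hst] at ht
    have htpos : 0 < t - y₀ := sub_pos.mpr ht'
    have := mul_pos ht htpos
    rwa [div_mul_cancel₀ _ (ne_of_gt htpos)] at this
  obtain ⟨u, hu, huIoo⟩ := mem_nhdsGT_iff_exists_Ioo_subset.mp h1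
  rw [mem_Ioi] at hu
  -- u ≤ y₀ + 1 since g (y₀+1) = 0
  have hgy1 : g (y₀ + 1) = 0 := by rw [hper]; exact hy₀
  have hu1 : u ≤ y₀ + 1 := by
    by_contra hc
    push_neg at hc
    have : (0 : ℝ) < g (y₀ + 1) := huIoo ⟨by linarith, hc⟩
    linarith [this, hgy1.ge]
  -- zero set to the right
  set T : Set ℝ := Icc u (y₀ + 1) ∩ g ⁻¹' {0} with hT
  have hTclosed : IsClosed T := isClosed_Icc.inter (isClosed_singleton.preimage hcont)
  have hTne : T.Nonempty := ⟨y₀ + 1, ⟨hu1, le_refl _⟩, hgy1⟩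
  have hTbdd : BddBelow T := ⟨u, fun x hx => hx.1.1⟩
  set z := sInf T with hzdef
  have hzT : z ∈ T := hTclosed.csInf_mem hTne hTbdd
  have hgz : g z = 0 := hzT.2
  have hzu : u ≤ z := hzT.1.1
  have hzy₀ : y₀ < z := lt_of_lt_of_le hu hzu
  -- g > 0 on (y₀, z)
  have hmid : ∀ t ∈ Ioo y₀ z, 0 < g t := by
    intro t ht
    by_contra hc
    push_neg at hc
    have htu : u ≤ t := by
      by_contra hc2
      push_neg at hc2
      exact absurd (huIoo ⟨ht.1, hc2⟩) (not_lt.mpr hc)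
    rcases eq_or_lt_of_le hc with heq | hlt
    · -- g t = 0 : t ∈ T, t < z = sInf T
      have : z ≤ t := csInf_le hTbdd ⟨⟨htu, le_trans ht.2.le (le_trans hzT.1.2 (le_refl _))⟩, by simpa using heq⟩
      linarith [ht.2]
    · -- g t < 0 : IVT between a positive point and t
      set s := (y₀ + u) / 2 with hs
      have hsIoo : s ∈ Ioo y₀ u := ⟨by simp [hs]; linarith, by simp [hs]; linarith⟩
      have hgs : 0 < g s := huIoo hsIoo
      have hst : s < t := lt_of_lt_of_le hsIoo.2 htu
      have : (0 : ℝ) ∈ Icc (g t) (g s) := ⟨hlt.le, hgs.le⟩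
      obtain ⟨w, hwmem, hgw⟩ := intermediate_value_Icc' hst.le hcont.continuousOn this
      have hwu : u ≤ w := by
        by_contra hc2
        push_neg at hc2
        have : 0 < g w := huIoo ⟨lt_of_lt_of_le hsIoo.1 hwmem.1, hc2⟩
        · linarith [hgw.ge]
      have hwT : w ∈ T := ⟨⟨hwu, le_trans hwmem.2 (le_trans ht.2.le (le_trans hzT.1.2 (le_refl _)))⟩, hgw⟩
      have : z ≤ w := csInf_le hTbdd hwT
      linarith [hwmem.2, ht.2]
  -- now derive contradiction at z
  have hposz : 0 < deriv g z := hz z hgz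
  have hslopez : Tendsto (slope g z) (𝓝[<] z) (𝓝 (deriv g z)) :=
    (hasDerivAt_iff_tendsto_slope.mp (hg z).hasDerivAt).mono_left
      (nhdsWithin_mono _ (fun x hx => ne_of_lt hx))
  have hev : ∀ᶠ t in 𝓝[<] z, slope g z t ≤ 0 := by
    filter_upwards [Ioo_mem_nhdsLT_of_mem ⟨hzy₀, le_refl z⟩] with t ht
    have hgt : 0 < g t := hmid t ht
    have : slope g z t = g t / (t - z) := by
      rw [slope_def_field, hgz, sub_zero]
    rw [this]
    exact (div_neg_of_pos_of_neg hgt (sub_neg.mpr ht.2)).le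
  have : deriv g z ≤ 0 := le_of_tendsto hslopez hev
  linarith

/-- The comparison lemma at the core of the uniqueness argument in Section 3.3:
two 1-periodic functions with equal `h`-weighted means cannot satisfy a strict
derivative comparison at every intersection point. -/
theorem stmt10
    (h : ℝ → ℝ) (hcont : Continuous h) (hper : ∀ y, h (y + 1) = h y)
    (hpos : ∀ y, 0 < h y) :
    ¬ ∃ ρ₁ ρ₂ : ℝ → ℝ, Differentiable ℝ ρ₁ ∧ Differentiable ℝ ρ₂ ∧
      (∀ y, ρ₁ (y + 1) = ρ₁ y) ∧ (∀ y, ρ₂ (y + 1) = ρ₂ y) ∧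
      (∫ y in (0 : ℝ)..1, h y * ρ₁ y) = (∫ y in (0 : ℝ)..1, h y * ρ₂ y) ∧
      (∀ y, ρ₁ y = ρ₂ y → deriv ρ₂ y < deriv ρ₁ y) := by
  rintro ⟨ρ₁, ρ₂, hd₁, hd₂, hp₁, hp₂, hint, hcomp⟩
  set g : ℝ → ℝ := fun y => ρ₁ y - ρ₂ y with hgdef
  have hgdiff : Differentiable ℝ g := hd₁.sub hd₂
  have hgcont : Continuous g := hgdiff.continuous
  have hgper : ∀ y, g (y + 1) = g y := fun y => by simp [hgdef, hp₁ y, hp₂ y]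
  have hgz : ∀ y, g y = 0 → 0 < deriv g y := by
    intro y hy
    have heq : ρ₁ y = ρ₂ y := by have := sub_eq_zero.mp hy; exact this
    have hder : deriv g y = deriv ρ₁ y - deriv ρ₂ y := deriv_sub (hd₁ y) (hd₂ y)
    rw [hder]
    linarith [hcomp y heq]
  have hne : ∀ y, g y ≠ 0 := no_zero_aux g hgdiff hgper hgz
  -- integral of h * g over [0,1] is zero
  have hint₁ : IntervalIntegrable (fun y => h y * ρ₁ y) MeasureTheory.volume 0 1 :=
    (hcont.mul hd₁.continuous).intervalIntegrable _ _
  have hint₂ : IntervalIntegrable (fun y => h y * ρ₂ y) MeasureTheory.volume 0 1 :=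
    (hcont.mul hd₂.continuous).intervalIntegrable _ _
  have hzero : (∫ y in (0:ℝ)..1, h y * g y) = 0 := by
    have : (∫ y in (0:ℝ)..1, h y * g y)
        = (∫ y in (0:ℝ)..1, h y * ρ₁ y) - (∫ y in (0:ℝ)..1, h y * ρ₂ y) := by
      rw [← intervalIntegral.integral_sub hint₁ hint₂]
      congr 1
      ext y
      simp [hgdef, mul_sub]
    rw [this, hint, sub_self]
  -- constant sign
  have hsign : (∀ y, 0 < g y) ∨ (∀ y, g y < 0) := by
    rcases lt_or_gt_of_ne (hne 0) with hneg | hposg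
    · right
      intro y
      by_contra hc
      push_neg at hc
      have hgy : 0 < g y := lt_of_le_of_ne hc (Ne.symm (hne y))
      have h0 : (0:ℝ) ∈ uIcc (g 0) (g y) := by
        rw [mem_uIcc]; left; exact ⟨hneg.le, hgy.le⟩
      obtain ⟨w, _, hw⟩ := intermediate_value_uIcc (f := g) hgcont.continuousOn h0
      exact hne w hw
    · left
      intro y
      by_contra hc
      push_neg at hc
      have hgy : g y < 0 := lt_of_le_of_ne hc (hne y)
      have h0 : (0:ℝ) ∈ uIcc (g 0) (g y) := by
        rw [mem_uIcc]; right; exact ⟨hgy.le, hposg.le⟩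
      obtain ⟨w, _, hw⟩ := intermediate_value_uIcc (f := g) hgcont.continuousOn h0
      exact hne w hw
  rcases hsign with hall | hall
  · have : 0 < (∫ y in (0:ℝ)..1, h y * g y) := by
      apply intervalIntegral.intervalIntegral_pos_of_pos_on
        ((hcont.mul hgcont).intervalIntegrable _ _)
      · intro x _
        exact mul_pos (hpos x) (hall x)
      · norm_num
    linarith [hzero ▸ this]
  · have : 0 < (∫ y in (0:ℝ)..1, h y * (-g y)) := by
      apply intervalIntegral.intervalIntegral_pos_of_pos_on
        ((hcont.mul hgcont.neg).intervalIntegrable _ _)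
      · intro x _
        exact mul_pos (hpos x) (neg_pos.mpr (hall x))
      · norm_num
    have hneg' : (∫ y in (0:ℝ)..1, h y * (-g y)) = -(∫ y in (0:ℝ)..1, h y * g y) := by
      rw [← intervalIntegral.integral_neg]
      congr 1; ext y; ring
    rw [hneg', hzero, neg_zero] at this
    exact lt_irrefl _ this
end

section
/- Let (Ω, μ) be a finite measure space, let ρ̄ > 0, β ∈ (1, ∞), and let p : [0, ρ̄) → ℝ be continuous and nondecreasing. Let (ρ_n) be a sequence of measurable functions on Ω with 0 ≤ ρ_n(x) < ρ̄ for μ-a.e. x. Suppose that ρ_n converges to a measurable function ρ weak-* in L^∞(Ω), where 0 ≤ ρ(x) < ρ̄ for μ-a.e. x, that p(ρ_n) converges weakly in L^β(Ω) to a function P̄, and that ρ_n·p(ρ_n) converges weakly in L^β(Ω) to a function Q. Then Q(x) ≥ ρ(x)·P̄(x) for μ-a.e. x ∈ Ω. -/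
open MeasureTheory Filter Topology ENNReal

lemma exists_measurable_ext {p : ℝ → ℝ} {rbar : ℝ} (hrbar : 0 < rbar)
    (hp : ContinuousOn p (Set.Ico 0 rbar)) :
    ∃ q : ℝ → ℝ, Measurable q ∧ ∀ t ∈ Set.Ico 0 rbar, q t = p t := by
  set c : ℕ → ℝ := fun k => rbar - rbar / (k + 1) with hc
  have hc0 : ∀ k : ℕ, 0 ≤ c k := by
    intro k
    have h1 : rbar / ((k : ℝ) + 1) ≤ rbar / 1 := by
      apply div_le_div_of_nonneg_left hrbar.le one_pos
      exact_mod_cast Nat.le_add_left 1 k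
    simp only [hc]
    simp only [div_one] at h1
    linarith
  have hclt : ∀ k : ℕ, c k < rbar := by
    intro k
    have : 0 < rbar / ((k : ℝ) + 1) := by positivity
    simp only [hc]; linarith
  have hcl : Tendsto c atTop (𝓝 rbar) := by
    have h1 : Tendsto (fun k : ℕ => rbar / ((k : ℝ) + 1)) atTop (𝓝 0) :=
      tendsto_const_nhds.div_atTop (tendsto_natCast_atTop_atTop.atTop_add tendsto_const_nhds)
    simpa using tendsto_const_nhds.sub h1
  set F : ℕ → ℝ → ℝ :=
    fun k => (Set.Icc (0:ℝ) (c k)).indicator (fun t => p (max 0 (min t (c k)))) with hF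
  have hFmeas : ∀ k, Measurable (F k) := by
    intro k
    have hcont : Continuous fun t => p (max 0 (min t (c k))) := by
      apply hp.comp_continuous (continuous_const.max (continuous_id.min continuous_const))
      intro t
      refine ⟨le_max_left _ _, lt_of_le_of_lt (max_le (hc0 k) (min_le_right _ _)) (hclt k)⟩
    exact hcont.measurable.indicator measurableSet_Icc
  refine ⟨fun t => if t ∈ Set.Ico 0 rbar then p t else 0, ?_, fun t ht => if_pos ht⟩
  apply measurable_of_tendsto_metrizable hFmeas
  rw [tendsto_pi_nhds]
  intro t
  by_cases ht : t ∈ Set.Ico 0 rbar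
  · rw [if_pos ht]
    have hev : ∀ᶠ k in atTop, F k t = p t := by
      filter_upwards [hcl.eventually (eventually_gt_nhds ht.2)] with k hk
      have hmem : t ∈ Set.Icc 0 (c k) := ⟨ht.1, hk.le⟩
      show (Set.Icc 0 (c k)).indicator (fun t => p (0 ⊔ t ⊓ c k)) t = p t
      rw [Set.indicator_of_mem hmem, min_eq_left hk.le, max_eq_right ht.1]
    exact Tendsto.congr' (hev.mono fun k h => h.symm) tendsto_const_nhds
  · rw [if_neg ht]
    have hev : ∀ k, F k t = 0 := by
      intro k
      apply Set.indicator_of_notMem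
      intro hmem
      exact ht ⟨hmem.1, lt_of_le_of_lt hmem.2 (hclt k)⟩
    simp only [hev]
    exact tendsto_const_nhds

lemma exists_tail_bound {Ω : Type*} [MeasurableSpace Ω] (μ : Measure Ω) [IsFiniteMeasure μ]
    (q : Ω → ℝ) (hq : Measurable q) (ε : ℝ≥0∞) (hε : 0 < ε) :
    ∃ c : ℝ, 0 ≤ c ∧ μ {x | c < |q x|} < ε := by
  set s : ℕ → Set Ω := fun m => {x | (m : ℝ) < |q x|} with hs
  have hmeas : ∀ m, NullMeasurableSet (s m) μ :=
    fun m => (measurableSet_lt measurable_const hq.abs).nullMeasurableSet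
  have hanti : Antitone s := by
    intro a b hab x hx
    exact lt_of_le_of_lt (show (a:ℝ) ≤ (b:ℝ) from Nat.cast_le.mpr hab) hx
  have hiInter : ⋂ m, s m = ∅ := by
    ext x
    simp only [Set.mem_iInter, Set.mem_empty_iff_false, iff_false, not_forall, not_lt, hs,
      Set.mem_setOf_eq]
    obtain ⟨m, hm⟩ := exists_nat_ge (|q x|)
    exact ⟨m, hm⟩
  have htend : Tendsto (μ ∘ s) atTop (𝓝 0) := by
    have := tendsto_measure_iInter_atTop hmeas hanti ⟨0, measure_ne_top μ _⟩
    rwa [hiInter, measure_empty] at this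
  have := htend.eventually_lt_const hε
  obtain ⟨m, hm⟩ := this.exists
  exact ⟨m, Nat.cast_nonneg m, hm⟩

lemma exists_weight {Ω : Type*} [MeasurableSpace Ω] (μ : Measure Ω) [IsFiniteMeasure μ]
    (q : ℕ → Ω → ℝ) (hq : ∀ n, Measurable (q n)) :
    ∃ w : Ω → ℝ, Measurable w ∧ (∀ x, 0 ≤ w x) ∧ (∀ x, w x ≤ 1) ∧ (∀ᵐ x ∂μ, 0 < w x) ∧
      ∀ n, ∃ C : ℝ, ∀ x, |q n x| * w x ≤ C := by
  -- choose tail cutoffs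
  have hcn : ∀ n : ℕ, ∃ c : ℝ, 0 ≤ c ∧ μ {x | c < |q n x|} < (2 : ℝ≥0∞)⁻¹ ^ n := by
    intro n
    exact exists_tail_bound μ (q n) (hq n) _ (ENNReal.pow_pos (ENNReal.inv_pos.mpr ENNReal.ofNat_ne_top) n)
  choose c hc0 hcμ using hcn
  -- the series
  set f : ℕ → Ω → ℝ≥0∞ :=
    fun n x => (2 : ℝ≥0∞)⁻¹ ^ n * (ENNReal.ofReal (|q n x|) / ENNReal.ofReal (1 + c n)) with hf
  set S : Ω → ℝ≥0∞ := fun x => ∑' n, f n x with hS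
  have hfmeas : ∀ n, Measurable (f n) := by
    intro n
    exact (((hq n).abs.ennreal_ofReal).div_const _).const_mul _
  have hSmeas : Measurable S := Measurable.ennreal_tsum hfmeas
  have hfne : ∀ n x, f n x ≠ ∞ := by
    intro n x
    apply ENNReal.mul_ne_top (by simp)
    apply ne_of_lt (ENNReal.div_lt_top ENNReal.ofReal_ne_top ?_)
    simp only [ne_eq, ENNReal.ofReal_eq_zero, not_le]
    linarith [hc0 n]
  -- a.e. finiteness of S via Borel–Cantelli
  have hBC : ∀ᵐ x ∂μ, ∀ᶠ n in atTop, ¬ (c n < |q n x|) := by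
    have hsum : (∑' n, μ {x | c n < |q n x|}) ≠ ∞ := by
      apply ne_of_lt
      calc (∑' n, μ {x | c n < |q n x|}) ≤ ∑' n, (2 : ℝ≥0∞)⁻¹ ^ n :=
            ENNReal.tsum_le_tsum fun n => (hcμ n).le
        _ = (1 - 2⁻¹)⁻¹ := ENNReal.tsum_geometric _
        _ < ∞ := by simp [ENNReal.sub_half]
    have h0 := measure_setOf_frequently_eq_zero (μ := μ) (p := fun n x => c n < |q n x|) hsum
    have h1 : ∀ᵐ x ∂μ, ¬ ∃ᶠ n in atTop, c n < |q n x| := by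
      rw [ae_iff]
      convert h0 using 2
      ext a
      simp only [Set.mem_setOf_eq, not_not, Filter.frequently_atTop]
    filter_upwards [h1] with x hx
    simpa [Filter.not_frequently] using hx
  have hSfin : ∀ᵐ x ∂μ, S x < ∞ := by
    filter_upwards [hBC] with x hx
    obtain ⟨N, hN⟩ := eventually_atTop.mp hx
    have hbound : ∀ n, f n x ≤ (if n < N then f n x else 0) + (2 : ℝ≥0∞)⁻¹ ^ n := by
      intro n
      by_cases hn : n < N
      · simp [hn]
      · simp only [hn, if_false, zero_add]
        have hqc : |q n x| ≤ c n := not_lt.mp (hN n (not_lt.mp hn))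
        have : ENNReal.ofReal (|q n x|) / ENNReal.ofReal (1 + c n) ≤ 1 := by
          apply ENNReal.div_le_of_le_mul
          rw [one_mul]
          exact ENNReal.ofReal_le_ofReal (by linarith)
        calc f n x ≤ (2 : ℝ≥0∞)⁻¹ ^ n * 1 := mul_le_mul_right this _
          _ = (2 : ℝ≥0∞)⁻¹ ^ n := mul_one _
    calc S x ≤ ∑' n, ((if n < N then f n x else 0) + (2 : ℝ≥0∞)⁻¹ ^ n) :=
          ENNReal.tsum_le_tsum hbound
      _ = (∑' n, (if n < N then f n x else 0)) + ∑' n, (2 : ℝ≥0∞)⁻¹ ^ n := ENNReal.tsum_add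
      _ = (∑ n ∈ Finset.range N, f n x) + (1 - 2⁻¹)⁻¹ := by
          rw [ENNReal.tsum_geometric]
          congr 1
          rw [tsum_eq_sum (s := Finset.range N) (fun n hn => by
            simp [Finset.mem_range] at hn
            simp [hn])]
          apply Finset.sum_congr rfl
          intro n hn
          simp [Finset.mem_range] at hn
          simp [hn]
      _ < ∞ := by
          apply ENNReal.add_lt_top.mpr
          constructor
          · exact ENNReal.sum_lt_top.mpr fun n _ => (hfne n x).lt_top
          · simp [ENNReal.sub_half]
  -- the weight
  refine ⟨fun x => ((1 + S x)⁻¹).toReal, ?_, ?_, ?_, ?_, ?_⟩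
  · exact ((hSmeas.const_add 1).inv).ennreal_toReal
  · intro x; exact ENNReal.toReal_nonneg
  · intro x
    have h1 : (1 + S x)⁻¹ ≤ 1 := by
      rw [ENNReal.inv_le_one]
      exact le_add_right le_rfl
    simpa using ENNReal.toReal_mono ENNReal.one_ne_top h1
  · filter_upwards [hSfin] with x hx
    apply ENNReal.toReal_pos
    · simp only [ne_eq, ENNReal.inv_eq_zero]
      exact ENNReal.add_ne_top.mpr ⟨ENNReal.one_ne_top, hx.ne⟩
    · simp only [ne_eq, ENNReal.inv_eq_top]
      exact fun h => by simp at h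
  · intro n
    refine ⟨2 ^ n * (1 + c n), fun x => ?_⟩
    by_cases hq0 : |q n x| = 0
    · rw [hq0, zero_mul]
      exact mul_nonneg (by positivity) (by linarith [hc0 n])
    have hqpos : 0 < |q n x| := lt_of_le_of_ne (abs_nonneg _) (Ne.symm hq0)
    by_cases hSx : S x = ∞
    · have : (1 + S x)⁻¹ = 0 := by
        rw [ENNReal.inv_eq_zero, hSx]
        simp
      show |q n x| * ((1 + S x)⁻¹).toReal ≤ 2 ^ n * (1 + c n)
      rw [this]
      simp only [ENNReal.toReal_zero, mul_zero]
      exact mul_nonneg (by positivity) (by linarith [hc0 n])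
    -- main case
    have hterm : f n x ≤ 1 + S x := le_trans (ENNReal.le_tsum n) (le_add_left le_rfl)
    have hfx0 : f n x ≠ 0 := by
      simp only [hf, ne_eq, mul_eq_zero, not_or]
      constructor
      · exact (ENNReal.pow_pos (ENNReal.inv_pos.mpr ENNReal.ofNat_ne_top) n).ne'
      · rw [ENNReal.div_eq_zero_iff]
        push_neg
        exact ⟨by simpa [ENNReal.ofReal_eq_zero] using hqpos, ENNReal.ofReal_ne_top⟩
    have hinv : (1 + S x)⁻¹ ≤ (f n x)⁻¹ := ENNReal.inv_le_inv' hterm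
    have hw : ((1 + S x)⁻¹).toReal ≤ ((f n x)⁻¹).toReal :=
      ENNReal.toReal_mono (by simpa [ENNReal.inv_eq_top] using hfx0) hinv
    have hfv : ((f n x)⁻¹).toReal = 2 ^ n * ((1 + c n) / |q n x|) := by
      rw [ENNReal.toReal_inv, hf]
      simp only []
      rw [ENNReal.toReal_mul, ENNReal.toReal_div,
        ENNReal.toReal_ofReal (abs_nonneg _),
        ENNReal.toReal_ofReal (by linarith [hc0 n] : (0:ℝ) ≤ 1 + c n)]
      rw [ENNReal.toReal_pow, ENNReal.toReal_inv, ENNReal.toReal_ofNat]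
      rw [mul_inv, ← inv_pow, inv_inv, inv_div]
    show |q n x| * ((1 + S x)⁻¹).toReal ≤ 2 ^ n * (1 + c n)
    calc |q n x| * ((1 + S x)⁻¹).toReal
        ≤ |q n x| * (2 ^ n * ((1 + c n) / |q n x|)) := by
          apply mul_le_mul_of_nonneg_left _ (abs_nonneg _)
          rw [← hfv]; exact hw
      _ = 2 ^ n * (1 + c n) := by
          field_simp

/-- Weak lower semicontinuity of the product of a monotone pressure with the density
(used at the end of Section 2.6.3 of the paper): the weak limit of `ρ_n · p(ρ_n)`
dominates `ρ · P̄` almost everywhere. -/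
theorem stmt12
    {Ω : Type*} [MeasurableSpace Ω] (μ : Measure Ω) [IsFiniteMeasure μ]
    (rbar : ℝ) (hrbar : 0 < rbar) (β β' : ℝ) (hβ : 1 < β) (hβ' : 1 / β + 1 / β' = 1)
    (p : ℝ → ℝ)
    (hp_cont : ContinuousOn p (Set.Ico 0 rbar))
    (hp_mono : MonotoneOn p (Set.Ico 0 rbar))
    (ρn : ℕ → Ω → ℝ) (hρn_meas : ∀ n, Measurable (ρn n))
    (hρn_bdd : ∀ n, ∀ᵐ x ∂μ, 0 ≤ ρn n x ∧ ρn n x < rbar)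
    (ρ : Ω → ℝ) (hρ_meas : Measurable ρ)
    (hρ_bdd : ∀ᵐ x ∂μ, 0 ≤ ρ x ∧ ρ x < rbar)
    (hweak : ∀ g : Ω → ℝ, Integrable g μ →
      Tendsto (fun n => ∫ x, ρn n x * g x ∂μ) atTop (nhds (∫ x, ρ x * g x ∂μ)))
    (P : Ω → ℝ) (hP_meas : Measurable P) (hP_mem : MemLp P (ENNReal.ofReal β) μ)
    (hweakP : ∀ g : Ω → ℝ, MemLp g (ENNReal.ofReal β') μ →
      Tendsto (fun n => ∫ x, p (ρn n x) * g x ∂μ) atTop (nhds (∫ x, P x * g x ∂μ)))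
    (Q : Ω → ℝ) (hQ_meas : Measurable Q) (hQ_mem : MemLp Q (ENNReal.ofReal β) μ)
    (hweakQ : ∀ g : Ω → ℝ, MemLp g (ENNReal.ofReal β') μ →
      Tendsto (fun n => ∫ x, ρn n x * p (ρn n x) * g x ∂μ) atTop
        (nhds (∫ x, Q x * g x ∂μ))) :
    ∀ᵐ x ∂μ, ρ x * P x ≤ Q x := by
  obtain ⟨pt, hpt_meas, hpt_eq⟩ := exists_measurable_ext hrbar hp_cont
  obtain ⟨w, hw_meas, hw0, hw1, hwpos, hwbdd⟩ :=
    exists_weight μ (fun n x => pt (ρn n x)) (fun n => hpt_meas.comp (hρn_meas n))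
  have hβ1 : (1:ℝ≥0∞) ≤ ENNReal.ofReal β := by
    rw [← ENNReal.ofReal_one]; exact ENNReal.ofReal_le_ofReal hβ.le
  have hPint : Integrable P μ := hP_mem.integrable hβ1
  have hQint : Integrable Q μ := hQ_mem.integrable hβ1
  have hρint : Integrable ρ μ := by
    apply Integrable.mono' (integrable_const rbar) hρ_meas.aestronglyMeasurable
    filter_upwards [hρ_bdd] with x hx
    rw [Real.norm_eq_abs, abs_of_nonneg hx.1]; exact hx.2.le
  -- Key step : for every constant ζ ∈ [0, rbar), a.e. ζ P + p ζ (ρ - ζ) ≤ Q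
  have key : ∀ ζ : ℝ, 0 ≤ ζ → ζ < rbar →
      ∀ᵐ x ∂μ, ζ * P x + p ζ * (ρ x - ζ) ≤ Q x := by
    intro ζ hζ0 hζr
    set f : Ω → ℝ := fun x => Q x - ζ * P x - p ζ * (ρ x - ζ) with hfdef
    have hf_meas : Measurable f :=
      (hQ_meas.sub (hP_meas.const_mul ζ)).sub ((hρ_meas.sub measurable_const).const_mul (p ζ))
    have hf_int : Integrable f μ :=
      (hQint.sub (hPint.const_mul ζ)).sub ((hρint.sub (integrable_const ζ)).const_mul (p ζ))
    set s : Set Ω := {x | f x < 0} with hsdef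
    have hs_meas : MeasurableSet s := measurableSet_lt hf_meas measurable_const
    set g : Ω → ℝ := s.indicator w with hg
    have hg_meas : Measurable g := hw_meas.indicator hs_meas
    have hg0 : ∀ x, 0 ≤ g x := fun x => Set.indicator_nonneg (fun y _ => hw0 y) x
    have hg1 : ∀ x, g x ≤ 1 := fun x => by
      by_cases hx : x ∈ s
      · rw [hg, Set.indicator_of_mem hx]; exact hw1 x
      · rw [hg, Set.indicator_of_notMem hx]; exact zero_le_one
    have hgw : ∀ x, g x ≤ w x := fun x => by
      by_cases hx : x ∈ s
      · rw [hg, Set.indicator_of_mem hx]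
      · rw [hg, Set.indicator_of_notMem hx]; exact hw0 x
    have hg_mem : MemLp g (ENNReal.ofReal β') μ :=
      MemLp.of_bound hg_meas.aestronglyMeasurable 1 (ae_of_all μ fun x => by
        rw [Real.norm_eq_abs, abs_of_nonneg (hg0 x)]; exact hg1 x)
    have hg_int : Integrable g μ := by
      apply Integrable.mono' (integrable_const 1) hg_meas.aestronglyMeasurable
      exact ae_of_all μ fun x => by
        rw [Real.norm_eq_abs, abs_of_nonneg (hg0 x)]; exact hg1 x
    -- the per-n inequality
    have hIn : ∀ n, 0 ≤ (∫ x, ρn n x * p (ρn n x) * g x ∂μ) - ζ * (∫ x, p (ρn n x) * g x ∂μ)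
        - p ζ * (∫ x, ρn n x * g x ∂μ) + p ζ * ζ * (∫ x, g x ∂μ) := by
      intro n
      obtain ⟨C, hC⟩ := hwbdd n
      have hint2 : Integrable (fun x => pt (ρn n x) * g x) μ := by
        apply Integrable.mono' (integrable_const C)
          ((hpt_meas.comp (hρn_meas n)).mul hg_meas).aestronglyMeasurable
        apply ae_of_all μ fun x => ?_
        calc ‖pt (ρn n x) * g x‖ = |pt (ρn n x)| * |g x| := abs_mul _ _
          _ ≤ |pt (ρn n x)| * w x := by
              apply mul_le_mul_of_nonneg_left _ (abs_nonneg _)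
              rw [abs_of_nonneg (hg0 x)]; exact hgw x
          _ ≤ C := hC x
      have hint1 : Integrable (fun x => ρn n x * pt (ρn n x) * g x) μ := by
        apply Integrable.mono' (integrable_const (rbar * C))
          (((hρn_meas n).mul (hpt_meas.comp (hρn_meas n))).mul hg_meas).aestronglyMeasurable
        filter_upwards [hρn_bdd n] with x hx
        have hC' : |pt (ρn n x)| * |g x| ≤ C := by
          calc |pt (ρn n x)| * |g x| = |pt (ρn n x)| * g x := by
                rw [abs_of_nonneg (hg0 x)]
            _ ≤ |pt (ρn n x)| * w x :=
                mul_le_mul_of_nonneg_left (hgw x) (abs_nonneg _)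
            _ ≤ C := hC x
        calc ‖ρn n x * pt (ρn n x) * g x‖ = |ρn n x| * (|pt (ρn n x)| * |g x|) := by
              rw [Real.norm_eq_abs, abs_mul, abs_mul, mul_assoc]
          _ ≤ rbar * (|pt (ρn n x)| * |g x|) := by
              apply mul_le_mul_of_nonneg_right _ (mul_nonneg (abs_nonneg _) (abs_nonneg _))
              rw [abs_of_nonneg hx.1]; exact hx.2.le
          _ ≤ rbar * C := mul_le_mul_of_nonneg_left hC' hrbar.le
      have hint3 : Integrable (fun x => ρn n x * g x) μ := by
        apply Integrable.mono' (integrable_const rbar)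
          ((hρn_meas n).mul hg_meas).aestronglyMeasurable
        filter_upwards [hρn_bdd n] with x hx
        calc ‖ρn n x * g x‖ = |ρn n x| * |g x| := abs_mul _ _
          _ ≤ rbar * 1 :=
              mul_le_mul (by rw [abs_of_nonneg hx.1]; exact hx.2.le)
                (by rw [abs_of_nonneg (hg0 x)]; exact hg1 x) (abs_nonneg _) hrbar.le
          _ = rbar := mul_one _
      have e1 : ∫ x, ρn n x * p (ρn n x) * g x ∂μ = ∫ x, ρn n x * pt (ρn n x) * g x ∂μ := by
        apply integral_congr_ae
        filter_upwards [hρn_bdd n] with x hx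
        rw [hpt_eq _ ⟨hx.1, hx.2⟩]
      have e2 : ∫ x, p (ρn n x) * g x ∂μ = ∫ x, pt (ρn n x) * g x ∂μ := by
        apply integral_congr_ae
        filter_upwards [hρn_bdd n] with x hx
        rw [hpt_eq _ ⟨hx.1, hx.2⟩]
      rw [e1, e2]
      have hcomb : ∫ x, (ρn n x * pt (ρn n x) * g x - ζ * (pt (ρn n x) * g x)
            - p ζ * (ρn n x * g x) + (p ζ * ζ) * g x) ∂μ
          = (∫ x, ρn n x * pt (ρn n x) * g x ∂μ) - ζ * (∫ x, pt (ρn n x) * g x ∂μ)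
            - p ζ * (∫ x, ρn n x * g x ∂μ) + p ζ * ζ * (∫ x, g x ∂μ) := by
        have hA : Integrable (fun x => ρn n x * pt (ρn n x) * g x
            - ζ * (pt (ρn n x) * g x)) μ := hint1.sub (hint2.const_mul ζ)
        have hB : Integrable (fun x => ρn n x * pt (ρn n x) * g x
            - ζ * (pt (ρn n x) * g x) - p ζ * (ρn n x * g x)) μ :=
          hA.sub (hint3.const_mul (p ζ))
        rw [integral_add hB (hg_int.const_mul (p ζ * ζ)),
          integral_sub hA (hint3.const_mul (p ζ)),
          integral_sub hint1 (hint2.const_mul ζ),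
          integral_const_mul, integral_const_mul, integral_const_mul]
      rw [← hcomb]
      apply integral_nonneg_of_ae
      filter_upwards [hρn_bdd n] with x hx
      have hmono : 0 ≤ (pt (ρn n x) - p ζ) * (ρn n x - ζ) := by
        rw [hpt_eq _ ⟨hx.1, hx.2⟩]
        rcases le_total (ρn n x) ζ with h | h
        · have ha : p (ρn n x) - p ζ ≤ 0 :=
            sub_nonpos.mpr (hp_mono ⟨hx.1, hx.2⟩ ⟨hζ0, hζr⟩ h)
          have hb : ρn n x - ζ ≤ 0 := sub_nonpos.mpr h
          nlinarith
        · exact mul_nonneg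
            (sub_nonneg.mpr (hp_mono ⟨hζ0, hζr⟩ ⟨hx.1, hx.2⟩ h)) (sub_nonneg.mpr h)
      calc (0:ℝ) ≤ (pt (ρn n x) - p ζ) * (ρn n x - ζ) * g x := mul_nonneg hmono (hg0 x)
        _ = ρn n x * pt (ρn n x) * g x - ζ * (pt (ρn n x) * g x)
            - p ζ * (ρn n x * g x) + (p ζ * ζ) * g x := by ring
    -- pass to the limit
    have hlim : Tendsto (fun n => (∫ x, ρn n x * p (ρn n x) * g x ∂μ)
        - ζ * (∫ x, p (ρn n x) * g x ∂μ) - p ζ * (∫ x, ρn n x * g x ∂μ)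
        + p ζ * ζ * (∫ x, g x ∂μ)) atTop
        (𝓝 ((∫ x, Q x * g x ∂μ) - ζ * (∫ x, P x * g x ∂μ) - p ζ * (∫ x, ρ x * g x ∂μ)
          + p ζ * ζ * (∫ x, g x ∂μ))) :=
      (((hweakQ g hg_mem).sub ((hweakP g hg_mem).const_mul ζ)).sub
        ((hweak g hg_int).const_mul (p ζ))).add tendsto_const_nhds
    have hL : 0 ≤ (∫ x, Q x * g x ∂μ) - ζ * (∫ x, P x * g x ∂μ)
        - p ζ * (∫ x, ρ x * g x ∂μ) + p ζ * ζ * (∫ x, g x ∂μ) :=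
      ge_of_tendsto' hlim hIn
    -- rewrite the limit as a single integral
    have hQg : Integrable (fun x => Q x * g x) μ := by
      apply (Integrable.bdd_mul (c := 1) hQint hg_meas.aestronglyMeasurable ?_).congr
      · exact ae_of_all μ fun x => mul_comm (g x) (Q x)
      · exact ae_of_all μ fun x => by
          rw [Real.norm_eq_abs, abs_of_nonneg (hg0 x)]; exact hg1 x
    have hPg : Integrable (fun x => P x * g x) μ := by
      apply (Integrable.bdd_mul (c := 1) hPint hg_meas.aestronglyMeasurable ?_).congr
      · exact ae_of_all μ fun x => mul_comm (g x) (P x)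
      · exact ae_of_all μ fun x => by
          rw [Real.norm_eq_abs, abs_of_nonneg (hg0 x)]; exact hg1 x
    have hρg : Integrable (fun x => ρ x * g x) μ := by
      apply (Integrable.bdd_mul (c := 1) hρint hg_meas.aestronglyMeasurable ?_).congr
      · exact ae_of_all μ fun x => mul_comm (g x) (ρ x)
      · exact ae_of_all μ fun x => by
          rw [Real.norm_eq_abs, abs_of_nonneg (hg0 x)]; exact hg1 x
    have hcomb2 : ∫ x, (Q x * g x - ζ * (P x * g x)
        - p ζ * (ρ x * g x) + (p ζ * ζ) * g x) ∂μ
        = (∫ x, Q x * g x ∂μ) - ζ * (∫ x, P x * g x ∂μ) - p ζ * (∫ x, ρ x * g x ∂μ)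
          + p ζ * ζ * (∫ x, g x ∂μ) := by
      have hA : Integrable (fun x => Q x * g x - ζ * (P x * g x)) μ :=
        hQg.sub (hPg.const_mul ζ)
      have hB : Integrable (fun x => Q x * g x - ζ * (P x * g x) - p ζ * (ρ x * g x)) μ :=
        hA.sub (hρg.const_mul (p ζ))
      rw [integral_add hB (hg_int.const_mul (p ζ * ζ)),
        integral_sub hA (hρg.const_mul (p ζ)),
        integral_sub hQg (hPg.const_mul ζ),
        integral_const_mul, integral_const_mul, integral_const_mul]
    have hfg : 0 ≤ ∫ x, f x * g x ∂μ := by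
      have heq : ∫ x, f x * g x ∂μ = ∫ x, (Q x * g x - ζ * (P x * g x)
          - p ζ * (ρ x * g x) + (p ζ * ζ) * g x) ∂μ := by
        apply integral_congr_ae
        apply ae_of_all
        intro x
        simp only [hfdef]
        ring
      rw [heq, hcomb2]
      exact hL
    -- conclude : a.e. f ≥ 0
    have hφ0 : ∀ x, 0 ≤ -(f x * g x) := by
      intro x
      by_cases hx : x ∈ s
      · have hfneg : f x < 0 := hx
        have := mul_nonpos_of_nonpos_of_nonneg hfneg.le (hg0 x)
        linarith
      · rw [hg, Set.indicator_of_notMem hx, mul_zero, neg_zero]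
    have hφint : Integrable (fun x => -(f x * g x)) μ := by
      apply Integrable.neg
      apply (Integrable.bdd_mul (c := 1) hf_int hg_meas.aestronglyMeasurable ?_).congr
      · exact ae_of_all μ fun x => mul_comm (g x) (f x)
      · exact ae_of_all μ fun x => by
          rw [Real.norm_eq_abs, abs_of_nonneg (hg0 x)]; exact hg1 x
    have hφzero : (fun x => -(f x * g x)) =ᵐ[μ] 0 := by
      rw [← integral_eq_zero_iff_of_nonneg hφ0 hφint]
      apply le_antisymm
      · rw [integral_neg]; linarith
      · exact integral_nonneg hφ0
    filter_upwards [hφzero, hwpos] with x h0 hwx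
    by_contra hcon
    push_neg at hcon
    have hfx : f x < 0 := by rw [hfdef]; simp only []; linarith
    have hxs : x ∈ s := hfx
    have h0' : -(f x * g x) = 0 := h0
    rw [hg, Set.indicator_of_mem hxs] at h0'
    have hmulz : f x * w x = 0 := by linarith
    rcases mul_eq_zero.mp hmulz with h | h
    · exact absurd h (ne_of_lt hfx)
    · exact absurd h (ne_of_gt hwx)
  -- apply with rational ζ
  have hQae : ∀ᵐ x ∂μ, ∀ r : ℚ, 0 ≤ (r:ℝ) → (r:ℝ) < rbar →
      (r:ℝ) * P x + p r * (ρ x - r) ≤ Q x := by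
    rw [ae_all_iff]
    intro r
    by_cases h1 : 0 ≤ (r:ℝ)
    · by_cases h2 : (r:ℝ) < rbar
      · filter_upwards [key r h1 h2] with x hx _ _
        exact hx
      · exact ae_of_all μ fun x h1' h2' => absurd h2' h2
    · exact ae_of_all μ fun x h1' _ => absurd h1' h1
  -- conclude pointwise by approximating ρ x by rationals from below
  filter_upwards [hρ_bdd, hQae] with x hx hrat
  rcases eq_or_lt_of_le hx.1 with h0 | h0
  · have h00 := hrat 0 (by norm_num) (by simpa using hrbar)
    rw [← h0, zero_mul]
    simpa [← h0] using h00
  · have hq : ∀ k : ℕ, ∃ r : ℚ, ρ x - min (ρ x) (1/((k:ℝ)+1)) < r ∧ (r:ℝ) < ρ x := by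
      intro k
      apply exists_rat_btwn
      have : 0 < min (ρ x) (1/((k:ℝ)+1)) := lt_min h0 (by positivity)
      linarith
    choose r hr1 hr2 using hq
    have hr0 : ∀ k, 0 ≤ (r k : ℝ) := by
      intro k
      have hle : 0 ≤ ρ x - min (ρ x) (1/((k:ℝ)+1)) := by
        have := min_le_left (ρ x) (1/((k:ℝ)+1)); linarith
      linarith [hr1 k]
    have hrlt : ∀ k, (r k:ℝ) < rbar := fun k => (hr2 k).trans hx.2
    have hrtend : Tendsto (fun k => (r k : ℝ)) atTop (𝓝 (ρ x)) := by
      apply tendsto_of_tendsto_of_tendsto_of_le_of_le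
        (g := fun k : ℕ => ρ x - 1/((k:ℝ)+1)) (h := fun _ : ℕ => ρ x)
      · have h1 : Tendsto (fun k : ℕ => 1/((k:ℝ)+1)) atTop (𝓝 0) :=
          tendsto_one_div_add_atTop_nhds_zero_nat
        simpa using tendsto_const_nhds.sub h1
      · exact tendsto_const_nhds
      · intro k
        have hmin : min (ρ x) (1/((k:ℝ)+1)) ≤ 1/((k:ℝ)+1) := min_le_right _ _
        linarith [hr1 k]
      · exact fun k => (hr2 k).le
    have hptend : Tendsto (fun k => p (r k)) atTop (𝓝 (p (ρ x))) := by
      have hcw : ContinuousWithinAt p (Set.Ico 0 rbar) (ρ x) := hp_cont _ ⟨hx.1, hx.2⟩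
      apply hcw.tendsto.comp
      rw [tendsto_nhdsWithin_iff]
      exact ⟨hrtend, Filter.Eventually.of_forall fun k => ⟨hr0 k, hrlt k⟩⟩
    have hrhs : Tendsto (fun k => (r k:ℝ) * P x + p (r k) * (ρ x - r k)) atTop
        (𝓝 (ρ x * P x + p (ρ x) * (ρ x - ρ x))) :=
      (hrtend.mul tendsto_const_nhds).add (hptend.mul (tendsto_const_nhds.sub hrtend))
    have hfin := le_of_tendsto hrhs
      (Filter.Eventually.of_forall fun k => hrat (r k) (hr0 k) (hrlt k))
    simpa using hfin
end
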